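/- arXiv:2308.05675 — 8 statements merged into one kernel-verified Lean document; each statement's English description precedes it below -/
import Mathlib

section
/- Let G be a simple graph with minimum degree at least 3, and let C be a cycle in G of length at least 4. If G contains no cycle of length 4 (as a subgraph), then the subgraph of G induced by the vertex set of C contains an induced cycle (hole) of length m for some integer m with 5 ≤ m ≤ length(C). -/
open SimpleGraph

/-- `G` contains a cycle of length `n` as a subgraph. -/
def HasCycleLength {V : Type*} (G : SimpleGraph V) (n : ℕ) : Prop :=
  ∃ (v : V) (c : G.Walk v v), c.IsCycle ∧ c.length = n

/-- A hole: a cycle without chords (induced cycle). -/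
def IsHole {V : Type*} (G : SimpleGraph V) {v : V} (c : G.Walk v v) : Prop :=
  c.IsCycle ∧ ∀ a b : V, a ∈ c.support → b ∈ c.support → G.Adj a b → s(a, b) ∈ c.edges

/-!
A shortest cycle of length at least 5 inside `V(C)` is a hole: a chord would split it into
two shorter cycles whose lengths add up to its length plus 2. Neither has length 4 (there
is no 4-cycle) nor at least 5 (minimality), so both are triangles and the cycle had length 4.
-/

namespace SimpleGraph.Walk

variable {V : Type*} {G : SimpleGraph V} [DecidableEq V]

lemma IsCycle.exists_split_of_chord_at_start {a b : V} {d : G.Walk a a} (hd : d.IsCycle)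
    (hb : b ∈ d.support) (hab : G.Adj a b) (hchord : s(a, b) ∉ d.edges) :
    ∃ (d₁ : G.Walk b b) (d₂ : G.Walk a a), d₁.IsCycle ∧ d₂.IsCycle ∧
      d₁.length + d₂.length = d.length + 2 ∧ d₁.support ⊆ d.support ∧ d₂.support ⊆ d.support := by
  set p := d.takeUntil b hb
  set q := d.dropUntil b hb
  have hspec : p.append q = d := d.take_spec hb
  have hq : q.IsPath := IsCycle.isPath_of_append_right (not_nil_of_ne hab.ne) (by rwa [hspec])
  refine ⟨cons hab.symm p, cons hab q, ?_, ?_, ?_, ?_, ?_⟩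
  · rw [cons_isCycle_iff, Sym2.eq_swap]
    exact ⟨hd.isPath_takeUntil hb, fun h => hchord (d.edges_takeUntil_subset_edges hb h)⟩
  · rw [cons_isCycle_iff]
    exact ⟨hq, fun h => hchord (d.edges_dropUntil_subset_edges hb h)⟩
  · rw [← hspec, length_append, length_cons, length_cons]
    omega
  · rw [support_cons]
    exact List.cons_subset.mpr ⟨hb, d.support_takeUntil_subset_support hb⟩
  · rw [support_cons]
    exact List.cons_subset.mpr ⟨d.start_mem_support, d.support_dropUntil_subset_support hb⟩

lemma IsCycle.exists_split_of_chord {u a b : V} {d : G.Walk u u} (hd : d.IsCycle)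
    (ha : a ∈ d.support) (hb : b ∈ d.support) (hab : G.Adj a b) (hchord : s(a, b) ∉ d.edges) :
    ∃ (x y : V) (d₁ : G.Walk x x) (d₂ : G.Walk y y), d₁.IsCycle ∧ d₂.IsCycle ∧
      d₁.length + d₂.length = d.length + 2 ∧ d₁.support ⊆ d.support ∧ d₂.support ⊆ d.support := by
  have hsupp : ∀ x, x ∈ (d.rotate a ha).support ↔ x ∈ d.support := fun x =>
    mem_support_rotate_iff d a ha
  obtain ⟨d₁, d₂, h₁, h₂, hlen, hs₁, hs₂⟩ := (hd.rotate ha).exists_split_of_chord_at_start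
    ((hsupp b).mpr hb) hab (by rwa [(d.rotate_edges a ha).perm.mem_iff])
  exact ⟨b, a, d₁, d₂, h₁, h₂, by rwa [length_rotate] at hlen,
    fun x hx => (hsupp x).mp (hs₁ hx), fun x hx => (hsupp x).mp (hs₂ hx)⟩

end SimpleGraph.Walk

theorem isHole_of_forall_le_length {V : Type*} {G : SimpleGraph V} (hC4 : ¬ HasCycleLength G 4)
    {u : V} {d : G.Walk u u} (hd : d.IsCycle) (h5 : 5 ≤ d.length)
    (hmin : ∀ (x : V) (e : G.Walk x x), e.IsCycle → 5 ≤ e.length → e.support ⊆ d.support →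
      d.length ≤ e.length) :
    IsHole G d := by
  classical
  refine ⟨hd, fun a b ha hb hab => by_contra fun hchord => ?_⟩
  obtain ⟨x, y, d₁, d₂, h₁, h₂, hlen, hs₁, hs₂⟩ := hd.exists_split_of_chord ha hb hab hchord
  have htriangle : ∀ (z : V) (e : G.Walk z z), e.IsCycle → e.support ⊆ d.support →
      e.length < d.length → e.length = 3 := fun z e he hs hlt => by
    have h3 := he.three_le_length
    have h4 : e.length ≠ 4 := fun h => hC4 ⟨z, e, he, h⟩
    have hlt5 : ¬ 5 ≤ e.length := fun h => (hmin z e he h hs).not_gt hlt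
    omega
  have hd₁ := htriangle x d₁ h₁ hs₁ (by linarith [h₂.three_le_length])
  have hd₂ := htriangle y d₂ h₂ hs₂ (by linarith [h₁.three_le_length])
  omega

theorem stmt_0_general {V : Type*} (G : SimpleGraph V)
    (hC4 : ¬ HasCycleLength G 4)
    {v : V} (c : G.Walk v v) (hc : c.IsCycle) (hlen : 4 ≤ c.length) :
    ∃ (w : V) (d : G.Walk w w), IsHole G d ∧ 5 ≤ d.length ∧ d.length ≤ c.length ∧
      ∀ x : V, x ∈ d.support → x ∈ c.support := by
  classical
  let P : ℕ → Prop := fun n =>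
    ∃ (w : V) (d : G.Walk w w), d.IsCycle ∧ 5 ≤ d.length ∧ d.length = n ∧ d.support ⊆ c.support
  have hc5 : 5 ≤ c.length := by
    by_contra h
    exact hC4 ⟨v, c, hc, by omega⟩
  have hP : ∃ n, P n := ⟨c.length, v, c, hc, hc5, rfl, List.Subset.refl _⟩
  obtain ⟨w, d, hd, hd5, hdlen, hdc⟩ := Nat.find_spec hP
  refine ⟨w, d, isHole_of_forall_le_length hC4 hd hd5 fun x e he he5 hed => ?_, hd5, ?_, hdc⟩
  · exact hdlen ▸ Nat.find_min' hP ⟨x, e, he, he5, rfl, List.Subset.trans hed hdc⟩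
  · exact hdlen ▸ Nat.find_min' hP ⟨v, c, hc, hc5, rfl, List.Subset.refl _⟩

theorem stmt_0 {V : Type*} [Fintype V] (G : SimpleGraph V) [DecidableRel G.Adj]
    (hdeg : ∀ v : V, 3 ≤ G.degree v)
    (hC4 : ¬ HasCycleLength G 4)
    {v : V} (c : G.Walk v v) (hc : c.IsCycle) (hlen : 4 ≤ c.length) :
    ∃ (w : V) (d : G.Walk w w), IsHole G d ∧ 5 ≤ d.length ∧ d.length ≤ c.length ∧
      ∀ x : V, x ∈ d.support → x ∈ c.support :=
  stmt_0_general G hC4 c hc hlen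
end

section
/- Let G be a simple graph containing neither a cycle of length 4 nor a cycle of length 8 as a subgraph, and let C = x_1 x_2 ... x_m x_1 be a cycle in G with 5 ≤ m ≤ 7. Define I_C to be the set of vertices x_i of C such that x_i and x_{i+1} (indices mod m) have a common neighbor outside C. Then |I_C| ≤ 7 − m. -/
open SimpleGraph

/-- The set of indices `i` such that `x i` and `x (i+1)` have a common
neighbor outside the cycle `x`. -/
def ICset {V : Type*} (G : SimpleGraph V) (m : ℕ) (x : ZMod m → V) : Set (ZMod m) :=
  {i | ∃ y, y ∉ Set.range x ∧ G.Adj (x i) y ∧ G.Adj (x (i + 1)) y}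

section Helpers

variable {V : Type*} {G : SimpleGraph V}

private lemma hc4' {a b c d : V} (hab : G.Adj a b) (hbc : G.Adj b c) (hcd : G.Adj c d)
    (hda : G.Adj d a) (h2 : a ≠ c) (h5 : b ≠ d) : HasCycleLength G 4 := by
  refine ⟨a, .cons hab (.cons hbc (.cons hcd (.cons hda .nil))), ?_, rfl⟩
  have h1 : a ≠ b := hab.ne
  have h4 : b ≠ c := hbc.ne
  have h6 : c ≠ d := hcd.ne
  have h3 : d ≠ a := hda.ne
  simp_all [Walk.isCycle_def, Walk.isTrail_def, Sym2.eq, Sym2.rel_iff', ne_comm]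

private lemma hc8' {a b c d e f g h : V}
    (h1 : G.Adj a b) (h2 : G.Adj b c) (h3 : G.Adj c d) (h4 : G.Adj d e)
    (h5 : G.Adj e f) (h6 : G.Adj f g) (h7 : G.Adj g h) (h8 : G.Adj h a)
    (hnd : List.Nodup [a,b,c,d,e,f,g,h]) : HasCycleLength G 8 := by
  refine ⟨a, .cons h1 (.cons h2 (.cons h3 (.cons h4 (.cons h5 (.cons h6 (.cons h7 (.cons h8 .nil))))))), ?_, rfl⟩
  simp only [List.nodup_cons, List.mem_cons, List.mem_singleton, List.not_mem_nil, or_false,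
    not_or, List.nodup_nil, and_true] at hnd
  obtain ⟨⟨n1,n2,n3,n4,n5,n6,n7⟩,⟨m2,m3,m4,m5,m6,m7⟩,⟨p3,p4,p5,p6,p7⟩,⟨q4,q5,q6,q7⟩,⟨r5,r6,r7⟩,⟨s6,s7⟩,t7⟩ := hnd
  simp_all [Walk.isCycle_def, Walk.isTrail_def, Sym2.eq, Sym2.rel_iff', ne_comm]

private lemma gap5 (x : ZMod 5 → V) (hinj : Function.Injective x)
    (hadj : ∀ i : ZMod 5, G.Adj (x i) (x (i + 1))) (y : V) (hy : y ∉ Set.range x)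
    (a b : ZMod 5) (hab : a + 2 = b) (u : G.Adj (x a) y) (v : G.Adj (x b) y) :
    HasCycleLength G 4 := by
  have hyne : ∀ c : ZMod 5, y ≠ x c := fun c h => hy ⟨c, h.symm⟩
  have hbc : G.Adj (x (a+1)) (x b) := by
    have := hadj (a+1)
    rwa [show a+1+1 = b from by rw [← hab]; ring] at this
  refine hc4' u.symm (hadj a) hbc v (hyne _) ?_
  intro hxx
  have hh : a = b := hinj hxx
  rw [← hh] at hab
  exact (by decide : (2 : ZMod 5) ≠ 0) (add_left_cancel (show a + 2 = a + 0 by rw [hab, add_zero]))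

private lemma gap6 (x : ZMod 6 → V) (hinj : Function.Injective x)
    (hadj : ∀ i : ZMod 6, G.Adj (x i) (x (i + 1))) (y : V) (hy : y ∉ Set.range x)
    (a b : ZMod 6) (hab : a + 2 = b) (u : G.Adj (x a) y) (v : G.Adj (x b) y) :
    HasCycleLength G 4 := by
  have hyne : ∀ c : ZMod 6, y ≠ x c := fun c h => hy ⟨c, h.symm⟩
  have hbc : G.Adj (x (a+1)) (x b) := by
    have := hadj (a+1)
    rwa [show a+1+1 = b from by rw [← hab]; ring] at this
  refine hc4' u.symm (hadj a) hbc v (hyne _) ?_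
  intro hxx
  have hh : a = b := hinj hxx
  rw [← hh] at hab
  exact (by decide : (2 : ZMod 6) ≠ 0) (add_left_cancel (show a + 2 = a + 0 by rw [hab, add_zero]))

private lemma sh5 (x : ZMod 5 → V) (hinj : Function.Injective x)
    (hadj : ∀ i : ZMod 5, G.Adj (x i) (x (i + 1))) (y : V) (hy : y ∉ Set.range x)
    (p q : ZMod 5) (hpq : p ≠ q)
    (a1 : G.Adj (x p) y) (a2 : G.Adj (x (p+1)) y)
    (b1 : G.Adj (x q) y) (b2 : G.Adj (x (q+1)) y) : HasCycleLength G 4 := by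
  obtain ⟨d, rfl⟩ : ∃ d, q = p + d := ⟨q - p, by ring⟩
  have hd : d ≠ 0 := fun h => hpq (by simp [h])
  rcases (by decide : ∀ d : ZMod 5, d ≠ 0 → d = 1 ∨ d = 2 ∨ d = 3 ∨ d = 4) d hd with rfl|rfl|rfl|rfl
  · exact gap5 x hinj hadj y hy p (p+1+1) (by ring) a1 b2
  · exact gap5 x hinj hadj y hy p (p+2) rfl a1 b1
  · exact gap5 x hinj hadj y hy (p+1) (p+3) (by ring) a2 b1
  · exact gap5 x hinj hadj y hy (p+4) (p+1) (by rw [add_assoc, show (4:ZMod 5)+2 = 1 from by decide]) b1 a2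

private lemma sh6 (x : ZMod 6 → V) (hinj : Function.Injective x)
    (hadj : ∀ i : ZMod 6, G.Adj (x i) (x (i + 1))) (y : V) (hy : y ∉ Set.range x)
    (p q : ZMod 6) (hpq : p ≠ q)
    (a1 : G.Adj (x p) y) (a2 : G.Adj (x (p+1)) y)
    (b1 : G.Adj (x q) y) (b2 : G.Adj (x (q+1)) y) : HasCycleLength G 4 := by
  obtain ⟨d, rfl⟩ : ∃ d, q = p + d := ⟨q - p, by ring⟩
  have hd : d ≠ 0 := fun h => hpq (by simp [h])
  rcases (by decide : ∀ d : ZMod 6, d ≠ 0 → d = 1 ∨ d = 2 ∨ d = 3 ∨ d = 4 ∨ d = 5) d hd with rfl|rfl|rfl|rfl|rfl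
  · exact gap6 x hinj hadj y hy p (p+1+1) (by ring) a1 b2
  · exact gap6 x hinj hadj y hy p (p+2) rfl a1 b1
  · exact gap6 x hinj hadj y hy (p+1) (p+3) (by ring) a2 b1
  · exact gap6 x hinj hadj y hy (p+4) p (by rw [add_assoc, show (4:ZMod 6)+2 = 0 from by decide, add_zero]) b1 a1
  · exact gap6 x hinj hadj y hy (p+5) (p+1) (by rw [add_assoc, show (5:ZMod 6)+2 = 1 from by decide]) b1 a2

private lemma case7 (G : SimpleGraph V) (hC8 : ¬ HasCycleLength G 8)
    (x : ZMod 7 → V) (hinj : Function.Injective x)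
    (hadj : ∀ i : ZMod 7, G.Adj (x i) (x (i + 1))) : (ICset G 7 x).ncard ≤ 0 := by
  rw [Nat.le_zero, Set.ncard_eq_zero (Set.toFinite _)]
  ext i
  simp only [ICset, Set.mem_setOf_eq, Set.mem_empty_iff_false, iff_false, not_exists]
  rintro y ⟨hy, h1, h2⟩
  apply hC8
  have hyne : ∀ a : ZMod 7, y ≠ x a := fun a h => hy ⟨a, h.symm⟩
  have hadj2 : ∀ c d : ZMod 7, c + 1 = d → G.Adj (x (i+c)) (x (i+d)) :=
    fun c d h => by rw [← h, ← add_assoc]; exact hadj (i+c)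
  have h1' : G.Adj (x (i+0)) y := by rwa [add_zero]
  refine hc8' h2.symm (hadj2 1 2 (by decide)) (hadj2 2 3 (by decide)) (hadj2 3 4 (by decide))
    (hadj2 4 5 (by decide)) (hadj2 5 6 (by decide)) (hadj2 6 0 (by decide)) h1' ?_
  have hm : List.Nodup (List.map (fun c : ZMod 7 => x (i+c)) [1,2,3,4,5,6,0]) :=
    (by decide : List.Nodup [(1:ZMod 7),2,3,4,5,6,0]).map (fun a b h => add_left_cancel (hinj h))
  exact List.nodup_cons.2 ⟨by simp [hyne], by simpa using hm⟩

private lemma case6 (G : SimpleGraph V) (hC4 : ¬ HasCycleLength G 4) (hC8 : ¬ HasCycleLength G 8)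
    (x : ZMod 6 → V) (hinj : Function.Injective x)
    (hadj : ∀ i : ZMod 6, G.Adj (x i) (x (i + 1))) : (ICset G 6 x).ncard ≤ 1 := by
  rw [Set.ncard_le_one (Set.toFinite _)]
  intro i hi j hj
  by_contra hij
  obtain ⟨y, hy, a1, a2⟩ := hi
  obtain ⟨z, hz, b1, b2⟩ := hj
  by_cases hyz : y = z
  · exact hC4 (sh6 x hinj hadj y hy i j hij a1 a2 (hyz ▸ b1) (hyz ▸ b2))
  apply hC8
  have hyne : ∀ c : ZMod 6, y ≠ x c := fun c h => hy ⟨c, h.symm⟩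
  have hzne : ∀ c : ZMod 6, z ≠ x c := fun c h => hz ⟨c, h.symm⟩
  have hxne : ∀ a b : ZMod 6, a ≠ b → x (i+a) ≠ x (i+b) := fun a b h hxx => h (add_left_cancel (hinj hxx))
  have hadj2 : ∀ c c' : ZMod 6, c + 1 = c' → G.Adj (x (i+c)) (x (i+c')) := fun c c' h => by
    rw [← h, ← add_assoc]; exact hadj (i+c)
  have shift : ∀ (c c' : ZMod 6) (v : V), c + 1 = c' → G.Adj (x (i+c+1)) v → G.Adj (x (i+c')) v :=
    fun c c' v h hadjv => by rwa [add_assoc, h] at hadjv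
  have a1' : G.Adj (x (i+0)) y := by rwa [add_zero]
  obtain ⟨d, rfl⟩ : ∃ d, j = i + d := ⟨j - i, by ring⟩
  have hd : d ≠ 0 := fun h => hij (by simp [h])
  rcases (by decide : ∀ d : ZMod 6, d ≠ 0 → d = 1 ∨ d = 2 ∨ d = 3 ∨ d = 4 ∨ d = 5) d hd with rfl|rfl|rfl|rfl|rfl
  · have b2' : G.Adj (x (i+2)) z := shift 1 2 z (by decide) b2
    refine hc8' (a2.symm) (b1) (b2'.symm) (hadj2 2 3 (by decide)) (hadj2 3 4 (by decide)) (hadj2 4 5 (by decide)) (hadj2 5 0 (by decide)) (a1') ?_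
    simp only [List.nodup_cons, List.mem_cons, List.mem_singleton, List.not_mem_nil, or_false,
      not_or, List.nodup_nil, and_true]
    repeat' apply And.intro
    all_goals first
      | exact not_false
      | exact hyz
      | exact hyne _
      | exact hzne _
      | exact (fun hh => hzne _ hh.symm)
      | exact hxne _ _ (by decide)
  · have b2' : G.Adj (x (i+3)) z := shift 2 3 z (by decide) b2
    refine hc8' (a2.symm) (hadj2 1 2 (by decide)) (b1) (b2'.symm) (hadj2 3 4 (by decide)) (hadj2 4 5 (by decide)) (hadj2 5 0 (by decide)) (a1') ?_
    simp only [List.nodup_cons, List.mem_cons, List.mem_singleton, List.not_mem_nil, or_false,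
      not_or, List.nodup_nil, and_true]
    repeat' apply And.intro
    all_goals first
      | exact not_false
      | exact hyz
      | exact hyne _
      | exact hzne _
      | exact (fun hh => hzne _ hh.symm)
      | exact hxne _ _ (by decide)
  · have b2' : G.Adj (x (i+4)) z := shift 3 4 z (by decide) b2
    refine hc8' (a2.symm) (hadj2 1 2 (by decide)) (hadj2 2 3 (by decide)) (b1) (b2'.symm) (hadj2 4 5 (by decide)) (hadj2 5 0 (by decide)) (a1') ?_
    simp only [List.nodup_cons, List.mem_cons, List.mem_singleton, List.not_mem_nil, or_false,
      not_or, List.nodup_nil, and_true]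
    repeat' apply And.intro
    all_goals first
      | exact not_false
      | exact hyz
      | exact hyne _
      | exact hzne _
      | exact (fun hh => hzne _ hh.symm)
      | exact hxne _ _ (by decide)
  · have b2' : G.Adj (x (i+5)) z := shift 4 5 z (by decide) b2
    refine hc8' (a2.symm) (hadj2 1 2 (by decide)) (hadj2 2 3 (by decide)) (hadj2 3 4 (by decide)) (b1) (b2'.symm) (hadj2 5 0 (by decide)) (a1') ?_
    simp only [List.nodup_cons, List.mem_cons, List.mem_singleton, List.not_mem_nil, or_false,
      not_or, List.nodup_nil, and_true]
    repeat' apply And.intro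
    all_goals first
      | exact not_false
      | exact hyz
      | exact hyne _
      | exact hzne _
      | exact (fun hh => hzne _ hh.symm)
      | exact hxne _ _ (by decide)
  · have b2' : G.Adj (x (i+0)) z := shift 5 0 z (by decide) b2
    refine hc8' (a2.symm) (hadj2 1 2 (by decide)) (hadj2 2 3 (by decide)) (hadj2 3 4 (by decide)) (hadj2 4 5 (by decide)) (b1) (b2'.symm) (a1') ?_
    simp only [List.nodup_cons, List.mem_cons, List.mem_singleton, List.not_mem_nil, or_false,
      not_or, List.nodup_nil, and_true]
    repeat' apply And.intro
    all_goals first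
      | exact not_false
      | exact hyz
      | exact hyne _
      | exact hzne _
      | exact (fun hh => hzne _ hh.symm)
      | exact hxne _ _ (by decide)

private lemma case5 (G : SimpleGraph V) (hC4 : ¬ HasCycleLength G 4) (hC8 : ¬ HasCycleLength G 8)
    (x : ZMod 5 → V) (hinj : Function.Injective x)
    (hadj : ∀ i : ZMod 5, G.Adj (x i) (x (i + 1))) : (ICset G 5 x).ncard ≤ 2 := by
  rw [← not_lt]
  intro hlt
  rw [Set.two_lt_ncard (Set.toFinite _)] at hlt
  obtain ⟨i, hi, j, hj, k, hk, hij, hik, hjk⟩ := hlt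
  obtain ⟨y, hy, a1, a2⟩ := hi
  obtain ⟨z, hz, b1, b2⟩ := hj
  obtain ⟨w, hw, c1, c2⟩ := hk
  by_cases hyz : y = z
  · exact hC4 (sh5 x hinj hadj y hy i j hij a1 a2 (hyz ▸ b1) (hyz ▸ b2))
  by_cases hyw : y = w
  · exact hC4 (sh5 x hinj hadj y hy i k hik a1 a2 (hyw ▸ c1) (hyw ▸ c2))
  by_cases hzw : z = w
  · exact hC4 (sh5 x hinj hadj z hz j k hjk b1 b2 (hzw ▸ c1) (hzw ▸ c2))
  apply hC8
  have hyne : ∀ c : ZMod 5, y ≠ x c := fun c h => hy ⟨c, h.symm⟩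
  have hzne : ∀ c : ZMod 5, z ≠ x c := fun c h => hz ⟨c, h.symm⟩
  have hwne : ∀ c : ZMod 5, w ≠ x c := fun c h => hw ⟨c, h.symm⟩
  have hxne : ∀ a b : ZMod 5, a ≠ b → x (i+a) ≠ x (i+b) := fun a b h hxx => h (add_left_cancel (hinj hxx))
  have hadj2 : ∀ c c' : ZMod 5, c + 1 = c' → G.Adj (x (i+c)) (x (i+c')) := fun c c' h => by
    rw [← h, ← add_assoc]; exact hadj (i+c)
  have shift : ∀ (c c' : ZMod 5) (v : V), c + 1 = c' → G.Adj (x (i+c+1)) v → G.Adj (x (i+c')) v :=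
    fun c c' v h hadjv => by rwa [add_assoc, h] at hadjv
  have a1' : G.Adj (x (i+0)) y := by rwa [add_zero]
  obtain ⟨d, rfl⟩ : ∃ d, j = i + d := ⟨j - i, by ring⟩
  obtain ⟨e, rfl⟩ : ∃ e, k = i + e := ⟨k - i, by ring⟩
  have hd : d ≠ 0 := fun h => hij (by simp [h])
  have he : e ≠ 0 := fun h => hik (by simp [h])
  have hde : d ≠ e := fun h => hjk (by rw [h])
  rcases (by decide : ∀ d e : ZMod 5, d ≠ 0 → e ≠ 0 → d ≠ e →
      (d = 1 ∧ e = 2) ∨ (d = 1 ∧ e = 3) ∨ (d = 1 ∧ e = 4) ∨ (d = 2 ∧ e = 1) ∨ (d = 2 ∧ e = 3) ∨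
      (d = 2 ∧ e = 4) ∨ (d = 3 ∧ e = 1) ∨ (d = 3 ∧ e = 2) ∨ (d = 3 ∧ e = 4) ∨ (d = 4 ∧ e = 1) ∨
      (d = 4 ∧ e = 2) ∨ (d = 4 ∧ e = 3)) d e hd he hde with
    ⟨rfl,rfl⟩|⟨rfl,rfl⟩|⟨rfl,rfl⟩|⟨rfl,rfl⟩|⟨rfl,rfl⟩|⟨rfl,rfl⟩|⟨rfl,rfl⟩|⟨rfl,rfl⟩|⟨rfl,rfl⟩|⟨rfl,rfl⟩|⟨rfl,rfl⟩|⟨rfl,rfl⟩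
  · have b2' : G.Adj (x (i+2)) z := shift 1 2 z (by decide) b2
    have c2' : G.Adj (x (i+3)) w := shift 2 3 w (by decide) c2
    refine hc8' (a2.symm) (b1) (b2'.symm) (c1) (c2'.symm) (hadj2 3 4 (by decide)) (hadj2 4 0 (by decide)) (a1') ?_
    simp only [List.nodup_cons, List.mem_cons, List.mem_singleton, List.not_mem_nil, or_false,
      not_or, List.nodup_nil, and_true]
    repeat' apply And.intro
    all_goals first
      | exact not_false
      | exact hyz
      | exact hyw
      | exact hzw
      | exact (fun hh => hzw hh.symm)
      | exact hyne _
      | exact hzne _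
      | exact hwne _
      | exact (fun hh => hzne _ hh.symm)
      | exact (fun hh => hwne _ hh.symm)
      | exact hxne _ _ (by decide)
  · have b2' : G.Adj (x (i+2)) z := shift 1 2 z (by decide) b2
    have c2' : G.Adj (x (i+4)) w := shift 3 4 w (by decide) c2
    refine hc8' (a2.symm) (b1) (b2'.symm) (hadj2 2 3 (by decide)) (c1) (c2'.symm) (hadj2 4 0 (by decide)) (a1') ?_
    simp only [List.nodup_cons, List.mem_cons, List.mem_singleton, List.not_mem_nil, or_false,
      not_or, List.nodup_nil, and_true]
    repeat' apply And.intro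
    all_goals first
      | exact not_false
      | exact hyz
      | exact hyw
      | exact hzw
      | exact (fun hh => hzw hh.symm)
      | exact hyne _
      | exact hzne _
      | exact hwne _
      | exact (fun hh => hzne _ hh.symm)
      | exact (fun hh => hwne _ hh.symm)
      | exact hxne _ _ (by decide)
  · have b2' : G.Adj (x (i+2)) z := shift 1 2 z (by decide) b2
    have c2' : G.Adj (x (i+0)) w := shift 4 0 w (by decide) c2
    refine hc8' (a2.symm) (b1) (b2'.symm) (hadj2 2 3 (by decide)) (hadj2 3 4 (by decide)) (c1) (c2'.symm) (a1') ?_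
    simp only [List.nodup_cons, List.mem_cons, List.mem_singleton, List.not_mem_nil, or_false,
      not_or, List.nodup_nil, and_true]
    repeat' apply And.intro
    all_goals first
      | exact not_false
      | exact hyz
      | exact hyw
      | exact hzw
      | exact (fun hh => hzw hh.symm)
      | exact hyne _
      | exact hzne _
      | exact hwne _
      | exact (fun hh => hzne _ hh.symm)
      | exact (fun hh => hwne _ hh.symm)
      | exact hxne _ _ (by decide)
  · have b2' : G.Adj (x (i+3)) z := shift 2 3 z (by decide) b2
    have c2' : G.Adj (x (i+2)) w := shift 1 2 w (by decide) c2
    refine hc8' (a2.symm) (c1) (c2'.symm) (b1) (b2'.symm) (hadj2 3 4 (by decide)) (hadj2 4 0 (by decide)) (a1') ?_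
    simp only [List.nodup_cons, List.mem_cons, List.mem_singleton, List.not_mem_nil, or_false,
      not_or, List.nodup_nil, and_true]
    repeat' apply And.intro
    all_goals first
      | exact not_false
      | exact hyz
      | exact hyw
      | exact hzw
      | exact (fun hh => hzw hh.symm)
      | exact hyne _
      | exact hzne _
      | exact hwne _
      | exact (fun hh => hzne _ hh.symm)
      | exact (fun hh => hwne _ hh.symm)
      | exact hxne _ _ (by decide)
  · have b2' : G.Adj (x (i+3)) z := shift 2 3 z (by decide) b2
    have c2' : G.Adj (x (i+4)) w := shift 3 4 w (by decide) c2
    refine hc8' (a2.symm) (hadj2 1 2 (by decide)) (b1) (b2'.symm) (c1) (c2'.symm) (hadj2 4 0 (by decide)) (a1') ?_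
    simp only [List.nodup_cons, List.mem_cons, List.mem_singleton, List.not_mem_nil, or_false,
      not_or, List.nodup_nil, and_true]
    repeat' apply And.intro
    all_goals first
      | exact not_false
      | exact hyz
      | exact hyw
      | exact hzw
      | exact (fun hh => hzw hh.symm)
      | exact hyne _
      | exact hzne _
      | exact hwne _
      | exact (fun hh => hzne _ hh.symm)
      | exact (fun hh => hwne _ hh.symm)
      | exact hxne _ _ (by decide)
  · have b2' : G.Adj (x (i+3)) z := shift 2 3 z (by decide) b2
    have c2' : G.Adj (x (i+0)) w := shift 4 0 w (by decide) c2
    refine hc8' (a2.symm) (hadj2 1 2 (by decide)) (b1) (b2'.symm) (hadj2 3 4 (by decide)) (c1) (c2'.symm) (a1') ?_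
    simp only [List.nodup_cons, List.mem_cons, List.mem_singleton, List.not_mem_nil, or_false,
      not_or, List.nodup_nil, and_true]
    repeat' apply And.intro
    all_goals first
      | exact not_false
      | exact hyz
      | exact hyw
      | exact hzw
      | exact (fun hh => hzw hh.symm)
      | exact hyne _
      | exact hzne _
      | exact hwne _
      | exact (fun hh => hzne _ hh.symm)
      | exact (fun hh => hwne _ hh.symm)
      | exact hxne _ _ (by decide)
  · have b2' : G.Adj (x (i+4)) z := shift 3 4 z (by decide) b2
    have c2' : G.Adj (x (i+2)) w := shift 1 2 w (by decide) c2
    refine hc8' (a2.symm) (c1) (c2'.symm) (hadj2 2 3 (by decide)) (b1) (b2'.symm) (hadj2 4 0 (by decide)) (a1') ?_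
    simp only [List.nodup_cons, List.mem_cons, List.mem_singleton, List.not_mem_nil, or_false,
      not_or, List.nodup_nil, and_true]
    repeat' apply And.intro
    all_goals first
      | exact not_false
      | exact hyz
      | exact hyw
      | exact hzw
      | exact (fun hh => hzw hh.symm)
      | exact hyne _
      | exact hzne _
      | exact hwne _
      | exact (fun hh => hzne _ hh.symm)
      | exact (fun hh => hwne _ hh.symm)
      | exact hxne _ _ (by decide)
  · have b2' : G.Adj (x (i+4)) z := shift 3 4 z (by decide) b2
    have c2' : G.Adj (x (i+3)) w := shift 2 3 w (by decide) c2
    refine hc8' (a2.symm) (hadj2 1 2 (by decide)) (c1) (c2'.symm) (b1) (b2'.symm) (hadj2 4 0 (by decide)) (a1') ?_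
    simp only [List.nodup_cons, List.mem_cons, List.mem_singleton, List.not_mem_nil, or_false,
      not_or, List.nodup_nil, and_true]
    repeat' apply And.intro
    all_goals first
      | exact not_false
      | exact hyz
      | exact hyw
      | exact hzw
      | exact (fun hh => hzw hh.symm)
      | exact hyne _
      | exact hzne _
      | exact hwne _
      | exact (fun hh => hzne _ hh.symm)
      | exact (fun hh => hwne _ hh.symm)
      | exact hxne _ _ (by decide)
  · have b2' : G.Adj (x (i+4)) z := shift 3 4 z (by decide) b2
    have c2' : G.Adj (x (i+0)) w := shift 4 0 w (by decide) c2
    refine hc8' (a2.symm) (hadj2 1 2 (by decide)) (hadj2 2 3 (by decide)) (b1) (b2'.symm) (c1) (c2'.symm) (a1') ?_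
    simp only [List.nodup_cons, List.mem_cons, List.mem_singleton, List.not_mem_nil, or_false,
      not_or, List.nodup_nil, and_true]
    repeat' apply And.intro
    all_goals first
      | exact not_false
      | exact hyz
      | exact hyw
      | exact hzw
      | exact (fun hh => hzw hh.symm)
      | exact hyne _
      | exact hzne _
      | exact hwne _
      | exact (fun hh => hzne _ hh.symm)
      | exact (fun hh => hwne _ hh.symm)
      | exact hxne _ _ (by decide)
  · have b2' : G.Adj (x (i+0)) z := shift 4 0 z (by decide) b2
    have c2' : G.Adj (x (i+2)) w := shift 1 2 w (by decide) c2
    refine hc8' (a2.symm) (c1) (c2'.symm) (hadj2 2 3 (by decide)) (hadj2 3 4 (by decide)) (b1) (b2'.symm) (a1') ?_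
    simp only [List.nodup_cons, List.mem_cons, List.mem_singleton, List.not_mem_nil, or_false,
      not_or, List.nodup_nil, and_true]
    repeat' apply And.intro
    all_goals first
      | exact not_false
      | exact hyz
      | exact hyw
      | exact hzw
      | exact (fun hh => hzw hh.symm)
      | exact hyne _
      | exact hzne _
      | exact hwne _
      | exact (fun hh => hzne _ hh.symm)
      | exact (fun hh => hwne _ hh.symm)
      | exact hxne _ _ (by decide)
  · have b2' : G.Adj (x (i+0)) z := shift 4 0 z (by decide) b2
    have c2' : G.Adj (x (i+3)) w := shift 2 3 w (by decide) c2
    refine hc8' (a2.symm) (hadj2 1 2 (by decide)) (c1) (c2'.symm) (hadj2 3 4 (by decide)) (b1) (b2'.symm) (a1') ?_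
    simp only [List.nodup_cons, List.mem_cons, List.mem_singleton, List.not_mem_nil, or_false,
      not_or, List.nodup_nil, and_true]
    repeat' apply And.intro
    all_goals first
      | exact not_false
      | exact hyz
      | exact hyw
      | exact hzw
      | exact (fun hh => hzw hh.symm)
      | exact hyne _
      | exact hzne _
      | exact hwne _
      | exact (fun hh => hzne _ hh.symm)
      | exact (fun hh => hwne _ hh.symm)
      | exact hxne _ _ (by decide)
  · have b2' : G.Adj (x (i+0)) z := shift 4 0 z (by decide) b2
    have c2' : G.Adj (x (i+4)) w := shift 3 4 w (by decide) c2
    refine hc8' (a2.symm) (hadj2 1 2 (by decide)) (hadj2 2 3 (by decide)) (c1) (c2'.symm) (b1) (b2'.symm) (a1') ?_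
    simp only [List.nodup_cons, List.mem_cons, List.mem_singleton, List.not_mem_nil, or_false,
      not_or, List.nodup_nil, and_true]
    repeat' apply And.intro
    all_goals first
      | exact not_false
      | exact hyz
      | exact hyw
      | exact hzw
      | exact (fun hh => hzw hh.symm)
      | exact hyne _
      | exact hzne _
      | exact hwne _
      | exact (fun hh => hzne _ hh.symm)
      | exact (fun hh => hwne _ hh.symm)
      | exact hxne _ _ (by decide)

end Helpers

theorem stmt_3 {V : Type*} (G : SimpleGraph V)
    (hC4 : ¬ HasCycleLength G 4) (hC8 : ¬ HasCycleLength G 8)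
    (m : ℕ) (hm5 : 5 ≤ m) (hm7 : m ≤ 7)
    (x : ZMod m → V) (hinj : Function.Injective x)
    (hadj : ∀ i : ZMod m, G.Adj (x i) (x (i + 1))) :
    (ICset G m x).ncard ≤ 7 - m := by
  interval_cases m
  · exact case5 G hC4 hC8 x hinj hadj
  · exact case6 G hC4 hC8 x hinj hadj
  · exact case7 G hC8 x hinj hadj
end

section
/- Let G be a simple graph containing neither C_4 nor C_8 as a subgraph, let C = x_1...x_m x_1 be an induced cycle (hole) of G of length m ≥ 4, and let u be a vertex outside C adjacent to x_i. If there is no hole C* in G with 5 ≤ ℓ(C*) < m, then all neighbors of u on C lie in {x_{i−1}, x_i, x_{i+1}} (indices modulo m). -/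
/-!
Suppose `u` is adjacent to `x p` and `x (p + d)` with `2 ≤ d ≤ m / 2` (reversing the hole if
necessary). Let `x (p + k)` be the first neighbour of `u` after `x p`. If `k = 1`, restart from
`x (p + 1)` with `d - 1`. Otherwise `u, x p, …, x (p + k), u` is a hole of length
`k + 2 ≤ m / 2 + 2`: for `k = 2` it is a `C₄`, and for `k ≥ 3` a hole of length in `[5, m)`.
When `d = 2`, `u, x p, x (p + 1), x (p + 2), u` is a `C₄` in any case.
-/

open SimpleGraph

/-- An induced cycle (hole) of length `m`, given by an injective map `ZMod m → V`
whose adjacencies are exactly the consecutive pairs. -/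
def IsCircInduced {V : Type*} (G : SimpleGraph V) (m : ℕ) (x : ZMod m → V) : Prop :=
  Function.Injective x ∧ ∀ i j : ZMod m, G.Adj (x i) (x j) ↔ (j = i + 1 ∨ i = j + 1)

theorem ZMod.natCast_injOn_Iio (m : ℕ) : Set.InjOn (Nat.cast : ℕ → ZMod m) (Set.Iio m) :=
  fun k hk l hl h => by rw [← ZMod.val_cast_of_lt hk, ← ZMod.val_cast_of_lt hl, h]

namespace IsCircInduced

variable {V : Type*} {G : SimpleGraph V} {m : ℕ} {x : ZMod m → V}

theorem adj_add_one (hx : IsCircInduced G m x) (t : ZMod m) : G.Adj (x t) (x (t + 1)) :=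
  (hx.2 t (t + 1)).2 (Or.inl rfl)

theorem comp_neg (hx : IsCircInduced G m x) : IsCircInduced G m (x ∘ Neg.neg) := by
  refine ⟨hx.1.comp neg_injective, fun s t => ?_⟩
  rw [Function.comp_apply, Function.comp_apply, hx.2]
  grind

theorem eq_of_apply_add_natCast_eq (hx : IsCircInduced G m x) {p : ZMod m} {k l : ℕ}
    (hk : k < m) (hl : l < m) (h : x (p + k) = x (p + l)) : k = l :=
  ZMod.natCast_injOn_Iio m hk hl (add_left_cancel (hx.1 h))

theorem eq_add_one_or_of_adj_add_natCast (hx : IsCircInduced G m x) {p : ZMod m} {k l : ℕ}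
    (hk : k + 1 < m) (hl : l + 1 < m) (h : G.Adj (x (p + k)) (x (p + l))) :
    l = k + 1 ∨ k = l + 1 := by
  refine ((hx.2 _ _).1 h).imp (fun h => ?_) (fun h => ?_) <;>
    refine ZMod.natCast_injOn_Iio m (Set.mem_Iio.2 (by omega)) (Set.mem_Iio.2 (by omega)) ?_ <;>
    push_cast <;> linear_combination h

def arc (hx : IsCircInduced G m x) (p : ZMod m) : (g : ℕ) → G.Walk (x p) (x (p + g))
  | 0 => Walk.nil.copy rfl (by simp)
  | g + 1 => ((hx.arc p g).concat (hx.adj_add_one _)).copy rfl (by push_cast; ring_nf)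

theorem length_arc (hx : IsCircInduced G m x) (p : ZMod m) (g : ℕ) : (hx.arc p g).length = g := by
  induction g with
  | zero => simp [arc]
  | succ g ih => simp [arc, ih]

theorem support_arc (hx : IsCircInduced G m x) (p : ZMod m) (g : ℕ) :
    (hx.arc p g).support = (List.range (g + 1)).map fun k : ℕ => x (p + k) := by
  induction g with
  | zero => simp [arc]
  | succ g ih =>
    rw [arc, Walk.support_copy, Walk.support_concat, ih, List.range_succ (n := g + 1)]
    simp [add_assoc]

theorem edges_arc (hx : IsCircInduced G m x) (p : ZMod m) (g : ℕ) :
    (hx.arc p g).edges = (List.range g).map fun k : ℕ => s(x (p + k), x (p + (k + 1 : ℕ))) := by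
  induction g with
  | zero => simp [arc]
  | succ g ih =>
    rw [arc, Walk.edges_copy, Walk.edges_concat, ih, List.range_succ]
    simp [add_assoc]

variable {u : V} {p : ZMod m} {g : ℕ}

def arcLoop (hx : IsCircInduced G m x) (hup : G.Adj u (x p)) (huq : G.Adj u (x (p + g))) :
    G.Walk u u :=
  Walk.cons hup ((hx.arc p g).concat huq.symm)

theorem length_arcLoop (hx : IsCircInduced G m x) (hup : G.Adj u (x p))
    (huq : G.Adj u (x (p + g))) : (hx.arcLoop hup huq).length = g + 2 := by
  simp [arcLoop, length_arc]

theorem mem_support_arcLoop (hx : IsCircInduced G m x) (hup : G.Adj u (x p))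
    (huq : G.Adj u (x (p + g))) {a : V} :
    a ∈ (hx.arcLoop hup huq).support ↔ a = u ∨ ∃ k ≤ g, a = x (p + k) := by
  simp only [arcLoop, Walk.support_cons, Walk.support_concat, support_arc]
  grind

theorem isCycle_arcLoop (hx : IsCircInduced G m x) (hu : u ∉ Set.range x) (hg : 1 ≤ g)
    (hgm : g < m) (hup : G.Adj u (x p)) (huq : G.Adj u (x (p + g))) :
    (hx.arcLoop hup huq).IsCycle := by
  refine (Walk.cons_isCycle_iff _ hup).2 ⟨?_, ?_⟩
  · refine Walk.IsPath.concat ?_ ?_ huq.symm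
    · rw [Walk.isPath_def, support_arc]
      refine List.Nodup.map_on (fun k hk l hl h => ?_) List.nodup_range
      have := List.mem_range.1 hk
      have := List.mem_range.1 hl
      exact hx.eq_of_apply_add_natCast_eq (by omega) (by omega) h
    · simp only [support_arc, List.mem_map, not_exists, not_and]
      exact fun k _ h => hu ⟨_, h⟩
  · have hu_arc : u ∉ (hx.arc p g).support := by
      simp only [support_arc, List.mem_map, not_exists, not_and]
      exact fun k _ h => hu ⟨_, h⟩
    rw [Walk.edges_concat, List.concat_eq_append, List.mem_append, List.mem_singleton,
      Sym2.eq_iff, not_or]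
    refine ⟨fun h => hu_arc (Walk.fst_mem_support_of_mem_edges _ h), ?_⟩
    rintro (⟨h, -⟩ | ⟨-, h⟩)
    · exact hu ⟨_, h.symm⟩
    · have := hx.eq_of_apply_add_natCast_eq (k := 0) (by omega) hgm (by simpa using h)
      omega

theorem isHole_arcLoop (hx : IsCircInduced G m x) (hu : u ∉ Set.range x) (hg : 1 ≤ g)
    (hgm : g + 1 < m) (hup : G.Adj u (x p)) (huq : G.Adj u (x (p + g)))
    (hinner : ∀ k : ℕ, 0 < k → k < g → ¬ G.Adj u (x (p + k))) :
    IsHole G (hx.arcLoop hup huq) := by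
  have mem_edges : ∀ {e}, e ∈ (hx.arcLoop hup huq).edges ↔
      e = s(u, x p) ∨ (∃ k < g, s(x (p + k), x (p + (k + 1 : ℕ))) = e) ∨
        e = s(x (p + g), u) := by
    simp [arcLoop, edges_arc]
  have spoke :
      ∀ k ≤ g, G.Adj u (x (p + k)) → s(u, x (p + k)) ∈ (hx.arcLoop hup huq).edges := by
    intro k hk hadj
    obtain rfl | hk0 := k.eq_zero_or_pos
    · simp [mem_edges]
    obtain rfl | hkg := hk.eq_or_lt
    · simp [mem_edges, Sym2.eq_swap]
    · exact absurd hadj (hinner k hk0 hkg)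
  have rim : ∀ k < g, s(x (p + k), x (p + (k + 1 : ℕ))) ∈ (hx.arcLoop hup huq).edges :=
    fun k hk => mem_edges.2 (Or.inr (Or.inl ⟨k, hk, rfl⟩))
  refine ⟨hx.isCycle_arcLoop hu hg (by omega) hup huq, fun a b ha hb hab => ?_⟩
  rw [mem_support_arcLoop] at ha hb
  rcases ha with rfl | ⟨k, hk, rfl⟩ <;> rcases hb with rfl | ⟨l, hl, rfl⟩
  · exact absurd hab G.irrefl
  · exact spoke l hl hab
  · rw [Sym2.eq_swap]
    exact spoke k hk hab.symm
  · rcases hx.eq_add_one_or_of_adj_add_natCast (by omega) (by omega) hab with rfl | rfl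
    · exact rim k (by omega)
    · rw [Sym2.eq_swap]
      exact rim l (by omega)

theorem not_adj_add_natCast (hx : IsCircInduced G m x) (hu : u ∉ Set.range x)
    (hC4 : ¬ ∃ (v : V) (c : G.Walk v v), c.IsCycle ∧ c.length = 4)
    (hshort : ¬ ∃ (w : V) (c : G.Walk w w), IsHole G c ∧ 5 ≤ c.length ∧ c.length < m)
    {d : ℕ} (hd : 2 ≤ d) (hdm : 2 * d ≤ m) (hup : G.Adj u (x p)) :
    ¬ G.Adj u (x (p + d)) := by
  induction d, hd using Nat.le_induction generalizing p with
  | base =>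
    exact fun hud => hC4 ⟨u, hx.arcLoop hup hud,
      hx.isCycle_arcLoop hu (by omega) (by omega) hup hud, hx.length_arcLoop hup hud⟩
  | succ d hd ih =>
    intro hud
    classical
    have hex : ∃ k : ℕ, 0 < k ∧ G.Adj u (x (p + k)) := ⟨d + 1, by omega, hud⟩
    obtain ⟨hk0, hadj⟩ := Nat.find_spec hex
    have hkd : Nat.find hex ≤ d + 1 := Nat.find_min' hex ⟨by omega, hud⟩
    obtain hk1 | hk2 := (show Nat.find hex = 1 ∨ 2 ≤ Nat.find hex by omega)
    · refine ih (p := p + 1) (by omega) (by simpa [hk1] using hadj) ?_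
      simpa [add_assoc, add_comm (1 : ZMod m)] using hud
    have hhole := hx.isHole_arcLoop hu (by omega) (by omega) hup hadj
      fun k hk0 hk hk' => Nat.find_min hex hk ⟨hk0, hk'⟩
    obtain hk | hk := hk2.eq_or_lt
    · exact hC4 ⟨u, _, hhole.1, by rw [length_arcLoop]; omega⟩
    · exact hshort ⟨u, _, hhole, by rw [length_arcLoop]; omega, by rw [length_arcLoop]; omega⟩

theorem not_adj_add_intCast (hx : IsCircInduced G m x) (hu : u ∉ Set.range x)
    (hC4 : ¬ ∃ (v : V) (c : G.Walk v v), c.IsCycle ∧ c.length = 4)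
    (hshort : ¬ ∃ (w : V) (c : G.Walk w w), IsHole G c ∧ 5 ≤ c.length ∧ c.length < m)
    {d : ℤ} (hd : 2 ≤ d.natAbs) (hdm : 2 * d.natAbs ≤ m) (hup : G.Adj u (x p)) :
    ¬ G.Adj u (x (p + d)) := by
  obtain hd' | hd' := d.natAbs_eq
  · rw [hd', Int.cast_natCast]
    exact hx.not_adj_add_natCast hu hC4 hshort hd hdm hup
  · have hu' : u ∉ Set.range (x ∘ Neg.neg) := fun ⟨t, ht⟩ => hu ⟨-t, ht⟩
    have := hx.comp_neg.not_adj_add_natCast hu' hC4 hshort hd hdm (p := -p) (by simpa using hup)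
    rw [hd', Int.cast_neg, Int.cast_natCast]
    simpa [neg_add_eq_sub, sub_eq_add_neg] using this

end IsCircInduced

theorem stmt_4_general {V : Type*} (G : SimpleGraph V)
    (hC4 : ¬ ∃ (v : V) (c : G.Walk v v), c.IsCycle ∧ c.length = 4)
    (m : ℕ) (hm : 4 ≤ m) (x : ZMod m → V) (hx : IsCircInduced G m x)
    (u : V) (hu : u ∉ Set.range x) (i : ZMod m) (hui : G.Adj u (x i))
    (hshort : ¬ ∃ (w : V) (d : G.Walk w w), IsHole G d ∧ 5 ≤ d.length ∧ d.length < m) :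
    ∀ j : ZMod m, G.Adj u (x j) → j = i - 1 ∨ j = i ∨ j = i + 1 := by
  intro j huj
  have : NeZero m := ⟨by omega⟩
  set d := (j - i).valMinAbs
  have hj : j = i + d := by rw [ZMod.coe_valMinAbs]; ring
  obtain hd | hd := le_or_gt d.natAbs 1
  · obtain hd | hd | hd : d = -1 ∨ d = 0 ∨ d = 1 := by omega
    all_goals simp [hj, hd, sub_eq_add_neg]
  · have hdm := ZMod.natAbs_valMinAbs_le (j - i)
    exact absurd (hj ▸ huj) (hx.not_adj_add_intCast hu hC4 hshort hd (by omega) hui)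

theorem stmt_4 {V : Type*} (G : SimpleGraph V)
    (hC4 : ¬ ∃ (v : V) (c : G.Walk v v), c.IsCycle ∧ c.length = 4)
    (hC8 : ¬ ∃ (v : V) (c : G.Walk v v), c.IsCycle ∧ c.length = 8)
    (m : ℕ) (hm : 4 ≤ m) (x : ZMod m → V) (hx : IsCircInduced G m x)
    (u : V) (hu : u ∉ Set.range x) (i : ZMod m) (hui : G.Adj u (x i))
    (hshort : ¬ ∃ (w : V) (d : G.Walk w w), IsHole G d ∧ 5 ≤ d.length ∧ d.length < m) :
    ∀ j : ZMod m, G.Adj u (x j) → j = i - 1 ∨ j = i ∨ j = i + 1 :=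
  stmt_4_general G hC4 m hm x hx u hu i hui hshort
end

section
/- Let G be a simple graph containing neither C_4 nor C_8, and let C = x_1 x_2 x_3 x_4 x_5 x_1 be a 5-cycle of G. Suppose P is a path in G − V(C) from a vertex u adjacent to x_i to a vertex v adjacent to x_j, with i ≠ j. If j ≡ i ± 1 (mod 5), then the length of P is not 1, 2, or 5; if j ≡ i ± 2 (mod 5), then the length of P is not 0, 3, or 4. -/
open SimpleGraph

private lemma cycle4 {V : Type*} {G : SimpleGraph V} {a b c d : V}
    (hab : G.Adj a b) (hbc : G.Adj b c) (hcd : G.Adj c d) (hda : G.Adj d a)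
    (hac : a ≠ c) (hbd : b ≠ d) : HasCycleLength G 4 := by
  refine ⟨a, .cons hab (.cons hbc (.cons hcd (.cons hda .nil))), ?_, rfl⟩
  have h1 := hab.ne; have h2 := hbc.ne; have h3 := hcd.ne; have h4 := hda.ne
  simp [Walk.isCycle_def, Walk.isTrail_def, List.nodup_cons, Sym2.eq, Sym2.rel_iff']
  aesop

private lemma cycle8 {V : Type*} {G : SimpleGraph V} {a b c d e f g h : V}
    (hab : G.Adj a b) (hbc : G.Adj b c) (hcd : G.Adj c d) (hde : G.Adj d e)
    (hef : G.Adj e f) (hfg : G.Adj f g) (hgh : G.Adj g h) (hha : G.Adj h a)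
    (hac : a ≠ c) (had : a ≠ d) (hae : a ≠ e) (haf : a ≠ f) (hag : a ≠ g)
    (hbd : b ≠ d) (hbe : b ≠ e) (hbf : b ≠ f) (hbg : b ≠ g) (hbh : b ≠ h)
    (hce : c ≠ e) (hcf : c ≠ f) (hcg : c ≠ g) (hch : c ≠ h)
    (hdf : d ≠ f) (hdg : d ≠ g) (hdh : d ≠ h)
    (heg : e ≠ g) (heh : e ≠ h) (hfh : f ≠ h) : HasCycleLength G 8 := by
  refine ⟨a, .cons hab (.cons hbc (.cons hcd (.cons hde (.cons hef (.cons hfg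
    (.cons hgh (.cons hha .nil))))))), ?_, rfl⟩
  have h1 := hab.ne; have h2 := hbc.ne; have h3 := hcd.ne; have h4 := hde.ne
  have h5 := hef.ne; have h6 := hfg.ne; have h7 := hgh.ne; have h8 := hha.ne
  simp [Walk.isCycle_def, Walk.isTrail_def, List.nodup_cons, Sym2.eq, Sym2.rel_iff']
  aesop

theorem stmt_9 {V : Type*} (G : SimpleGraph V)
    (hC4 : ¬ HasCycleLength G 4) (hC8 : ¬ HasCycleLength G 8)
    (x : ZMod 5 → V) (hinj : Function.Injective x)
    (hadj : ∀ i : ZMod 5, G.Adj (x i) (x (i + 1)))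
    (i j : ZMod 5) (hij : i ≠ j)
    -- a path p of length n in G - V(C), from u = p 0 ∈ A_i to v = p n ∈ A_j
    (n : ℕ) (p : Fin (n + 1) → V)
    (hout : ∀ a, p a ∉ Set.range x)
    (hpinj : Function.Injective p)
    (hpath : ∀ a : Fin n, G.Adj (p a.castSucc) (p a.succ))
    (hu : G.Adj (x i) (p 0)) (hv : G.Adj (x j) (p (Fin.last n))) :
    ((j = i + 1 ∨ j = i - 1) → n ≠ 1 ∧ n ≠ 2 ∧ n ≠ 5) ∧
    ((j = i + 2 ∨ j = i - 2) → n ≠ 0 ∧ n ≠ 3 ∧ n ≠ 4) := by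
  have hu' : G.Adj (x (i + 0)) (p 0) := by rwa [add_zero]
  have hadj' : ∀ a b : ZMod 5, a + 1 = b → G.Adj (x (i + a)) (x (i + b)) := by
    intro a b hb; have := hadj (i + a); rwa [add_assoc, hb] at this
  have hxne : ∀ {a b : ZMod 5}, a ≠ b → x (i + a) ≠ x (i + b) :=
    fun h => hinj.ne fun e => h (add_left_cancel e)
  have hpx : ∀ (a) (k : ZMod 5), p a ≠ x k := fun a k h => hout a ⟨k, h.symm⟩
  have hxp : ∀ (k : ZMod 5) (a), x k ≠ p a := fun k a h => hpx a k h.symm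
  clear hu hij
  constructor
  · rintro (rfl | rfl)
    · -- j = i + 1
      refine ⟨?_, ?_, ?_⟩ <;> rintro rfl
      · refine hC4 (cycle4 hu' (hpath ⟨0, by omega⟩) hv.symm
          (hadj' 0 1 (by decide)).symm ?_ ?_) <;>
        (first | exact hxne (by decide) | exact hpinj.ne (by decide) | exact hpx _ _ | exact hxp _ _)
      · refine hC8 (cycle8 hu' (hpath ⟨0, by omega⟩) (hpath ⟨1, by omega⟩) hv.symm
          (hadj' 1 2 (by decide)) (hadj' 2 3 (by decide)) (hadj' 3 4 (by decide))
          (hadj' 4 0 (by decide))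
          ?_ ?_ ?_ ?_ ?_ ?_ ?_ ?_ ?_ ?_ ?_ ?_ ?_ ?_ ?_ ?_ ?_ ?_ ?_ ?_) <;>
        (first | exact hxne (by decide) | exact hpinj.ne (by decide) | exact hpx _ _ | exact hxp _ _)
      · refine hC8 (cycle8 hu' (hpath ⟨0, by omega⟩) (hpath ⟨1, by omega⟩)
          (hpath ⟨2, by omega⟩) (hpath ⟨3, by omega⟩) (hpath ⟨4, by omega⟩) hv.symm
          (hadj' 0 1 (by decide)).symm
          ?_ ?_ ?_ ?_ ?_ ?_ ?_ ?_ ?_ ?_ ?_ ?_ ?_ ?_ ?_ ?_ ?_ ?_ ?_ ?_) <;>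
        (first | exact hxne (by decide) | exact hpinj.ne (by decide) | exact hpx _ _ | exact hxp _ _)
    · -- j = i - 1 = i + 4
      rw [show i - 1 = i + 4 from by rw [show (4:ZMod 5) = -1 from by decide]; ring] at hv
      refine ⟨?_, ?_, ?_⟩ <;> rintro rfl
      · refine hC4 (cycle4 hu' (hpath ⟨0, by omega⟩) hv.symm
          (hadj' 4 0 (by decide)) ?_ ?_) <;>
        (first | exact hxne (by decide) | exact hpinj.ne (by decide) | exact hpx _ _ | exact hxp _ _)
      · refine hC8 (cycle8 hu' (hpath ⟨0, by omega⟩) (hpath ⟨1, by omega⟩) hv.symm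
          (hadj' 3 4 (by decide)).symm (hadj' 2 3 (by decide)).symm
          (hadj' 1 2 (by decide)).symm (hadj' 0 1 (by decide)).symm
          ?_ ?_ ?_ ?_ ?_ ?_ ?_ ?_ ?_ ?_ ?_ ?_ ?_ ?_ ?_ ?_ ?_ ?_ ?_ ?_) <;>
        (first | exact hxne (by decide) | exact hpinj.ne (by decide) | exact hpx _ _ | exact hxp _ _)
      · refine hC8 (cycle8 hu' (hpath ⟨0, by omega⟩) (hpath ⟨1, by omega⟩)
          (hpath ⟨2, by omega⟩) (hpath ⟨3, by omega⟩) (hpath ⟨4, by omega⟩) hv.symm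
          (hadj' 4 0 (by decide))
          ?_ ?_ ?_ ?_ ?_ ?_ ?_ ?_ ?_ ?_ ?_ ?_ ?_ ?_ ?_ ?_ ?_ ?_ ?_ ?_) <;>
        (first | exact hxne (by decide) | exact hpinj.ne (by decide) | exact hpx _ _ | exact hxp _ _)
  · rintro (rfl | rfl)
    · -- j = i + 2
      refine ⟨?_, ?_, ?_⟩ <;> rintro rfl
      · refine hC4 (cycle4 hu' hv.symm (hadj' 1 2 (by decide)).symm
          (hadj' 0 1 (by decide)).symm ?_ ?_) <;>
        (first | exact hxne (by decide) | exact hpinj.ne (by decide) | exact hpx _ _ | exact hxp _ _)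
      · refine hC8 (cycle8 hu' (hpath ⟨0, by omega⟩) (hpath ⟨1, by omega⟩)
          (hpath ⟨2, by omega⟩) hv.symm
          (hadj' 2 3 (by decide)) (hadj' 3 4 (by decide)) (hadj' 4 0 (by decide))
          ?_ ?_ ?_ ?_ ?_ ?_ ?_ ?_ ?_ ?_ ?_ ?_ ?_ ?_ ?_ ?_ ?_ ?_ ?_ ?_) <;>
        (first | exact hxne (by decide) | exact hpinj.ne (by decide) | exact hpx _ _ | exact hxp _ _)
      · refine hC8 (cycle8 hu' (hpath ⟨0, by omega⟩) (hpath ⟨1, by omega⟩)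
          (hpath ⟨2, by omega⟩) (hpath ⟨3, by omega⟩) hv.symm
          (hadj' 1 2 (by decide)).symm (hadj' 0 1 (by decide)).symm
          ?_ ?_ ?_ ?_ ?_ ?_ ?_ ?_ ?_ ?_ ?_ ?_ ?_ ?_ ?_ ?_ ?_ ?_ ?_ ?_) <;>
        (first | exact hxne (by decide) | exact hpinj.ne (by decide) | exact hpx _ _ | exact hxp _ _)
    · -- j = i - 2 = i + 3
      rw [show i - 2 = i + 3 from by rw [show (3:ZMod 5) = -2 from by decide]; ring] at hv
      refine ⟨?_, ?_, ?_⟩ <;> rintro rfl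
      · refine hC4 (cycle4 hu' hv.symm (hadj' 3 4 (by decide))
          (hadj' 4 0 (by decide)) ?_ ?_) <;>
        (first | exact hxne (by decide) | exact hpinj.ne (by decide) | exact hpx _ _ | exact hxp _ _)
      · refine hC8 (cycle8 hu' (hpath ⟨0, by omega⟩) (hpath ⟨1, by omega⟩)
          (hpath ⟨2, by omega⟩) hv.symm
          (hadj' 2 3 (by decide)).symm (hadj' 1 2 (by decide)).symm
          (hadj' 0 1 (by decide)).symm
          ?_ ?_ ?_ ?_ ?_ ?_ ?_ ?_ ?_ ?_ ?_ ?_ ?_ ?_ ?_ ?_ ?_ ?_ ?_ ?_) <;>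
        (first | exact hxne (by decide) | exact hpinj.ne (by decide) | exact hpx _ _ | exact hxp _ _)
      · refine hC8 (cycle8 hu' (hpath ⟨0, by omega⟩) (hpath ⟨1, by omega⟩)
          (hpath ⟨2, by omega⟩) (hpath ⟨3, by omega⟩) hv.symm
          (hadj' 3 4 (by decide)) (hadj' 4 0 (by decide))
          ?_ ?_ ?_ ?_ ?_ ?_ ?_ ?_ ?_ ?_ ?_ ?_ ?_ ?_ ?_ ?_ ?_ ?_ ?_ ?_) <;>
        (first | exact hxne (by decide) | exact hpinj.ne (by decide) | exact hpx _ _ | exact hxp _ _)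
end

section
/- Let G be a simple graph with no C_4 or C_8, let C = x_1...x_5 x_1 be a 5-cycle, and suppose x_i ∈ I_C, i.e., x_i and x_{i+1} have a common neighbor outside C. Let P = u_1...u_s and Q = v_1...v_t be paths in G − V(C) with u_1 ∈ A_i ∩ A_{i+1} and v_1 ∈ A_{i+2} ∪ A_{i+4}. If s + t ≤ 7 then P and Q are vertex-disjoint, and if s + t ≤ 6 then there is no edge of G between V(P) and V(Q). -/
open SimpleGraph

/-!
Both claims say that there is no walk of length at most 5 in `G - V(C)` from a vertex of
`A_i ∩ A_{i+1}` to a vertex of `A_{i+2} ∪ A_{i+4}`: follow `P` to the common vertex (or edge)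
and then `Q` backwards. Reflecting `C`, the end may be taken in `A_{i+2}`. Shortening such a
walk to a path of length `L ≤ 5` and closing it through `C` along the arcs from `x_{i+2}` back to
`x_{i+1}` or `x_i` gives cycles of lengths `L + 3`, `L + 4`, `L + 5` and `L + 6`, one of which
is `4` or `8`.
-/

namespace SimpleGraph

variable {V : Type*} {G : SimpleGraph V}

theorem hasCycleLength_of_isChain {l : List V} (hne : l ≠ []) (hnd : l.Nodup)
    (hchain : l.IsChain G.Adj) (hlen : 3 ≤ l.length)
    (hclose : G.Adj (l.getLast hne) (l.head hne)) : HasCycleLength G l.length := by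
  set p := Walk.ofSupport l hne hchain
  have hp : p.IsPath := by rwa [Walk.isPath_def, Walk.support_ofSupport]
  refine ⟨_, p.append hclose.toWalk, hp.isCycle_append (.of_adj hclose) ?_ ?_, ?_⟩
  · rw [Walk.support_ofSupport, show hclose.toWalk.support.tail = [l.head hne] from rfl]
    obtain ⟨a, l, rfl⟩ := List.exists_cons_of_ne_nil hne
    simpa using (List.nodup_cons.mp hnd).1
  · left
    simp only [p, Walk.length_ofSupport]
    omega
  · simp only [p, Walk.length_append, Walk.length_ofSupport, Walk.length_cons, Walk.length_nil]
    omega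

theorem Walk.IsPath.hasCycleLength_of_append {u w : V} {p : G.Walk u w} (hp : p.IsPath)
    {c : List V} (hne : c ≠ []) (hnd : c.Nodup) (hdisj : ∀ v ∈ c, v ∉ p.support)
    (hchain : (w :: c).IsChain G.Adj) (hclose : G.Adj (c.getLast hne) u)
    (hlen : 2 ≤ p.length + c.length) : HasCycleLength G (p.length + 1 + c.length) := by
  have hsupp : (p.support ++ c).IsChain G.Adj := by
    refine p.isChain_adj_support.append hchain.tail fun a ha b hb ↦ ?_
    rw [List.getLast?_eq_some_getLast p.support_ne_nil, Walk.getLast_support,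
      Option.mem_some_iff] at ha
    exact ha ▸ (List.isChain_cons.mp hchain).1 b hb
  have hclose' : G.Adj ((p.support ++ c).getLast (by simp [hne]))
      ((p.support ++ c).head (by simp)) := by
    rwa [List.getLast_append_of_ne_nil _ hne, List.head_append_of_ne_nil p.support_ne_nil,
      Walk.head_support]
  have := hasCycleLength_of_isChain _
    (List.nodup_append.mpr ⟨hp.support_nodup, hnd, fun a ha b hb hab ↦ hdisj b hb (hab ▸ ha)⟩)
    hsupp (by rw [List.length_append, Walk.length_support]; omega) hclose'
  rwa [List.length_append, Walk.length_support] at this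

theorem exists_walk_of_adj_succ {s : ℕ} (hs : 0 < s) {P : Fin s → V}
    (hP : ∀ a b : Fin s, a.val + 1 = b.val → G.Adj (P a) (P b)) (a : Fin s) :
    ∃ w : G.Walk (P ⟨0, hs⟩) (P a), w.length = a ∧ ∀ v ∈ w.support, v ∈ Set.range P := by
  obtain ⟨n, hn⟩ := a
  induction n with
  | zero => exact ⟨.nil, rfl, by simp⟩
  | succ n ih =>
    obtain ⟨w, hlen, hsupp⟩ := ih (by omega)
    refine ⟨w.concat (hP ⟨n, by omega⟩ ⟨n + 1, hn⟩ rfl), by simp [hlen], fun v hv ↦ ?_⟩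
    rw [Walk.support_concat, List.mem_append, List.mem_singleton] at hv
    exact hv.elim (hsupp v) fun hv ↦ ⟨_, hv.symm⟩

section FiveCycle

variable {x : ZMod 5 → V}

theorem isChain_adj_map (hadj : ∀ i, G.Adj (x i) (x (i + 1))) {js : List (ZMod 5)}
    (h : js.IsChain fun a b ↦ a + 1 = b ∨ b + 1 = a) : (js.map x).IsChain G.Adj :=
  List.isChain_map_of_isChain x (by rintro a b (rfl | rfl); exacts [hadj a, (hadj b).symm]) h

theorem Walk.IsPath.hasCycleLength_of_arc (hinj : Function.Injective x)
    (hadj : ∀ i, G.Adj (x i) (x (i + 1))) {u w : V} {p : G.Walk u w} (hp : p.IsPath)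
    (hout : ∀ v ∈ p.support, v ∉ Set.range x) {j : ZMod 5} (hw : G.Adj w (x j))
    {js : List (ZMod 5)} (hnd : (j :: js).Nodup)
    (hchain : (j :: js).IsChain fun a b ↦ a + 1 = b ∨ b + 1 = a)
    (hclose : G.Adj (x ((j :: js).getLast (List.cons_ne_nil _ _))) u)
    (hlen : 1 ≤ p.length + js.length) :
    HasCycleLength G (p.length + 1 + (j :: js).length) := by
  have hdisj : ∀ v ∈ (j :: js).map x, v ∉ p.support := by
    rintro _ hv hvp
    obtain ⟨k, -, rfl⟩ := List.mem_map.mp hv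
    exact hout _ hvp ⟨k, rfl⟩
  have := hp.hasCycleLength_of_append (by simp) (hnd.map hinj) hdisj
    (List.isChain_cons.mpr ⟨by simpa using hw, isChain_adj_map hadj hchain⟩)
    (by rwa [List.getLast_map])
    (by simp only [List.map_cons, List.length_cons, List.length_map]; omega)
  rwa [List.length_map] at this

theorem five_lt_length_of_adj_two (hC4 : ¬ HasCycleLength G 4) (hC8 : ¬ HasCycleLength G 8)
    (hinj : Function.Injective x) (hadj : ∀ i, G.Adj (x i) (x (i + 1))) {u w : V}
    (p : G.Walk u w) (hout : ∀ v ∈ p.support, v ∉ Set.range x)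
    (hu₀ : G.Adj (x 0) u) (hu₁ : G.Adj (x 1) u) (hw : G.Adj (x 2) w) : 5 < p.length := by
  classical
  by_contra! hp
  have arc := fun js : List (ZMod 5) ↦ p.bypass_isPath.hasCycleLength_of_arc hinj hadj
    (fun v hv ↦ hout v (p.support_bypass_subset_support hv)) hw.symm (js := js)
  have hq : p.bypass.length ≤ 5 := p.length_bypass_le_length.trans hp
  interval_cases p.bypass.length
  · exact hC4 (arc [1, 0] (by decide) (by decide) hu₀ (by simp))
  · exact hC4 (arc [1] (by decide) (by decide) hu₁ (by simp))
  · exact hC8 (arc [3, 4, 0, 1] (by decide) (by decide) hu₁ (by simp))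
  · exact hC8 (arc [3, 4, 0] (by decide) (by decide) hu₀ (by simp))
  · exact hC8 (arc [1, 0] (by decide) (by decide) hu₀ (by simp))
  · exact hC8 (arc [1] (by decide) (by decide) hu₁ (by simp))

theorem five_lt_length_of_adj (hC4 : ¬ HasCycleLength G 4) (hC8 : ¬ HasCycleLength G 8)
    (hinj : Function.Injective x) (hadj : ∀ i, G.Adj (x i) (x (i + 1))) (i : ZMod 5) {u w : V}
    (p : G.Walk u w) (hout : ∀ v ∈ p.support, v ∉ Set.range x)
    (hu : G.Adj (x i) u) (hu' : G.Adj (x (i + 1)) u)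
    (hw : G.Adj (x (i + 2)) w ∨ G.Adj (x (i + 4)) w) : 5 < p.length := by
  have hout' (f : ZMod 5 → ZMod 5) : ∀ v ∈ p.support, v ∉ Set.range (x ∘ f) :=
    fun v hv ⟨j, hj⟩ ↦ hout v hv ⟨f j, hj⟩
  rcases hw with hw | hw
  · refine five_lt_length_of_adj_two hC4 hC8 (hinj.comp (add_right_injective i))
      (fun j ↦ ?_) p (hout' _) (by simpa using hu) hu' hw
    simpa [add_assoc] using hadj (i + j)
  -- Reflecting `C` by `j ↦ i + 1 - j` swaps `x i` and `x (i + 1)` and moves `x (i + 4)` to `x 2`.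
  · refine five_lt_length_of_adj_two hC4 hC8 (hinj.comp (sub_right_injective (b := i + 1)))
      (fun j ↦ ?_) p (hout' fun j ↦ i + 1 - j) (by simpa using hu')
      (by simpa using hu) ?_
    · show G.Adj (x (i + 1 - j)) (x (i + 1 - (j + 1)))
      rw [show i + 1 - (j + 1) = i - j by ring, show i + 1 - j = i - j + 1 by ring]
      exact (hadj _).symm
    · show G.Adj (x (i + 1 - 2)) w
      rwa [show i + 1 - 2 = i + 4 by rw [add_sub_assoc]; rfl]

end FiveCycle

end SimpleGraph

theorem stmt_10_general {V : Type*} (G : SimpleGraph V)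
    (hC4 : ¬ HasCycleLength G 4) (hC8 : ¬ HasCycleLength G 8)
    (x : ZMod 5 → V) (hinj : Function.Injective x)
    (hadj : ∀ i : ZMod 5, G.Adj (x i) (x (i + 1)))
    (i : ZMod 5)
    -- paths P = u_1 … u_s and Q = v_1 … v_t in G - V(C)
    (s t : ℕ) (hs : 0 < s) (ht : 0 < t)
    (P : Fin s → V) (Q : Fin t → V)
    (hPout : ∀ a, P a ∉ Set.range x) (hQout : ∀ a, Q a ∉ Set.range x)
    (hPpath : ∀ a b : Fin s, a.val + 1 = b.val → G.Adj (P a) (P b))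
    (hQpath : ∀ a b : Fin t, a.val + 1 = b.val → G.Adj (Q a) (Q b))
    -- u_1 ∈ A_i ∩ A_{i+1}  (in particular x_i ∈ I_C)
    (hu1 : G.Adj (x i) (P ⟨0, hs⟩)) (hu1' : G.Adj (x (i + 1)) (P ⟨0, hs⟩))
    -- v_1 ∈ A_{i+2} ∪ A_{i+4}
    (hv1 : G.Adj (x (i + 2)) (Q ⟨0, ht⟩) ∨ G.Adj (x (i + 4)) (Q ⟨0, ht⟩)) :
    (s + t ≤ 7 → ∀ (a : Fin s) (b : Fin t), P a ≠ Q b) ∧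
    (s + t ≤ 6 → ∀ (a : Fin s) (b : Fin t), ¬ G.Adj (P a) (Q b)) := by
  have hlong (W : G.Walk (P ⟨0, hs⟩) (Q ⟨0, ht⟩))
      (hW : ∀ v ∈ W.support, v ∈ Set.range P ∨ v ∈ Set.range Q) : 5 < W.length := by
    refine five_lt_length_of_adj hC4 hC8 hinj hadj i W (fun v hv ↦ ?_) hu1 hu1' hv1
    rcases hW v hv with ⟨a, rfl⟩ | ⟨b, rfl⟩
    exacts [hPout a, hQout b]
  refine ⟨fun hst a b hab ↦ ?_, fun hst a b hab ↦ ?_⟩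
  all_goals
    obtain ⟨wP, hlP, hsP⟩ := exists_walk_of_adj_succ hs hPpath a
    obtain ⟨wQ, hlQ, hsQ⟩ := exists_walk_of_adj_succ ht hQpath b
  · have := hlong (wP.append (wQ.reverse.copy hab.symm rfl)) fun v hv ↦ by
      simp only [Walk.mem_support_append_iff, Walk.support_copy, Walk.support_reverse,
        List.mem_reverse] at hv
      exact hv.imp (hsP v) (hsQ v)
    simp only [Walk.length_append, Walk.length_copy, Walk.length_reverse] at this
    omega
  · have := hlong (wP.append (.cons hab wQ.reverse)) fun v hv ↦ by
      simp only [Walk.mem_support_append_iff, Walk.support_cons, Walk.support_reverse,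
        List.mem_cons, List.mem_reverse] at hv
      rcases hv with hv | rfl | hv
      exacts [.inl (hsP v hv), .inl ⟨a, rfl⟩, .inr (hsQ v hv)]
    simp only [Walk.length_append, Walk.length_cons, Walk.length_reverse] at this
    omega

theorem stmt_10 {V : Type*} (G : SimpleGraph V)
    (hC4 : ¬ HasCycleLength G 4) (hC8 : ¬ HasCycleLength G 8)
    (x : ZMod 5 → V) (hinj : Function.Injective x)
    (hadj : ∀ i : ZMod 5, G.Adj (x i) (x (i + 1)))
    (i : ZMod 5)
    -- paths P = u_1 … u_s and Q = v_1 … v_t in G - V(C)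
    (s t : ℕ) (hs : 0 < s) (ht : 0 < t)
    (P : Fin s → V) (Q : Fin t → V)
    (hPout : ∀ a, P a ∉ Set.range x) (hQout : ∀ a, Q a ∉ Set.range x)
    (hPinj : Function.Injective P) (hQinj : Function.Injective Q)
    (hPpath : ∀ a b : Fin s, a.val + 1 = b.val → G.Adj (P a) (P b))
    (hQpath : ∀ a b : Fin t, a.val + 1 = b.val → G.Adj (Q a) (Q b))
    -- u_1 ∈ A_i ∩ A_{i+1}  (in particular x_i ∈ I_C)
    (hu1 : G.Adj (x i) (P ⟨0, hs⟩)) (hu1' : G.Adj (x (i + 1)) (P ⟨0, hs⟩))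
    -- v_1 ∈ A_{i+2} ∪ A_{i+4}
    (hv1 : G.Adj (x (i + 2)) (Q ⟨0, ht⟩) ∨ G.Adj (x (i + 4)) (Q ⟨0, ht⟩)) :
    (s + t ≤ 7 → ∀ (a : Fin s) (b : Fin t), P a ≠ Q b) ∧
    (s + t ≤ 6 → ∀ (a : Fin s) (b : Fin t), ¬ G.Adj (P a) (Q b)) :=
  stmt_10_general G hC4 hC8 x hinj hadj i s t hs ht P Q hPout hQout hPpath hQpath hu1 hu1' hv1
end

section
/- Let G be a P_{10}-free graph with minimum degree at least 3 containing neither C_4 nor C_8, and let C = x_1...x_5 x_1 be a good 5-hole of G. Then for every index i with x_i ∉ I_C ∪ I_C^+, there exists a good (C, x_i)-path of length 3: an induced path y_i z_i u_i in G − V(C) with x_i y_i ∈ E(G) such that the only edge between {y_i, z_i, u_i} and V(C) is y_i x_i. -/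
open SimpleGraph

/-- A good hole: a hole of length `m ≥ 5`, where `G` has no hole `C'` with
`5 ≤ ℓ(C') < m`, and subject to this `|I_C|` is maximum among holes of length `m`. -/
def IsGoodHole {V : Type*} (G : SimpleGraph V) (m : ℕ) (x : ZMod m → V) : Prop :=
  5 ≤ m ∧ IsCircInduced G m x ∧
  (¬ ∃ (w : V) (d : G.Walk w w), IsHole G d ∧ 5 ≤ d.length ∧ d.length < m) ∧
  (∀ y : ZMod m → V, IsCircInduced G m y → (ICset G m y).ncard ≤ (ICset G m x).ncard)

/-- `G` has no induced path on 10 vertices. -/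
def P10Free {V : Type*} (G : SimpleGraph V) : Prop :=
  ¬ ∃ p : Fin 10 → V, Function.Injective p ∧
    ∀ a b : Fin 10, G.Adj (p a) (p b) ↔ (a.val + 1 = b.val ∨ b.val + 1 = a.val)

/-!
Rotate the hole so that `i = 0`. As `x 0, x 4 ∉ I_C` and `G` has no `C₄`, every neighbour of
`x 0` off `C` sees only `x 0` on `C`; fix one, `y`. If some neighbour `z` of `y` has no neighbour
on `C`, two further neighbours of `z` exist, and unless one of them ends a good path `x 0 y z u`,
each sees `y`, `x 2` or `x 3` and the pair closes a `C₄` or a `C₈` with `C`. Otherwise two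
neighbours `t₁, t₂ ≠ x 0` of `y` both see `C`; the same cycle count forces, say, `t₁ ~ x 0` and
`t₂ ~ x 2` (or `x 3`, which is the mirror image). Then `x 1 x 0 y t₂ x 2` is a `5`-hole whose
`I`-set contains the image of `I_C` under `j ↦ -j` and also `1` (witnessed by `t₁`), against the
maximality of `|I_C|`.
-/

section Cycles

variable {V : Type*} {G : SimpleGraph V}

theorem hasCycleLength_four {a b c d : V} (hab : G.Adj a b) (hbc : G.Adj b c) (hcd : G.Adj c d)
    (hda : G.Adj d a) (hnd : [a, b, c, d].Nodup) : HasCycleLength G 4 := by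
  refine ⟨a, .cons hab (.cons hbc (.cons hcd (.cons hda .nil))), ?_, rfl⟩
  rw [Walk.cons_isCycle_iff, Walk.isPath_def]
  refine ⟨(List.nodup_rotate (n := 1)).2 hnd, ?_⟩
  simp only [List.nodup_cons, List.mem_cons, List.not_mem_nil, not_or] at hnd
  simp [hnd]

theorem hasCycleLength_eight {a b c d e f g h : V} (hab : G.Adj a b) (hbc : G.Adj b c)
    (hcd : G.Adj c d) (hde : G.Adj d e) (hef : G.Adj e f) (hfg : G.Adj f g) (hgh : G.Adj g h)
    (hha : G.Adj h a) (hnd : [a, b, c, d, e, f, g, h].Nodup) : HasCycleLength G 8 := by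
  refine ⟨a, .cons hab (.cons hbc (.cons hcd (.cons hde (.cons hef (.cons hfg
    (.cons hgh (.cons hha .nil))))))), ?_, rfl⟩
  rw [Walk.cons_isCycle_iff, Walk.isPath_def]
  refine ⟨(List.nodup_rotate (n := 1)).2 hnd, ?_⟩
  simp only [List.nodup_cons, List.mem_cons, List.not_mem_nil, not_or] at hnd
  simp [hnd]

theorem eq_of_common_neighbors (hC4 : ¬ HasCycleLength G 4) {a b c d : V} (hac : a ≠ c)
    (hab : G.Adj a b) (hbc : G.Adj b c) (had : G.Adj a d) (hdc : G.Adj d c) : b = d := by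
  by_contra hbd
  exact hC4 (hasCycleLength_four hab hbc hdc.symm had.symm
    (by simp [hac, hbd, hab.ne, hbc.ne, had.ne, hdc.ne']))

theorem exists_adj_ne_ne {v : V} [Fintype (G.neighborSet v)] (hv : 3 ≤ G.degree v)
    (a b : V) : ∃ w, G.Adj v w ∧ w ≠ a ∧ w ≠ b := by
  classical
  obtain ⟨w, hw, hwab⟩ := Finset.exists_mem_notMem_of_card_lt_card
    (Finset.card_le_two.trans_lt (G.card_neighborFinset_eq_degree v ▸ hv))
  simp only [Finset.mem_insert, Finset.mem_singleton, not_or] at hwab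
  exact ⟨w, (G.mem_neighborFinset v w).1 hw, hwab⟩

end Cycles

/-- `x i - y - z - u` is a good `(C, x i)`-path of length three for the hole `C` given by `x`. -/
def IsGoodPath {V : Type*} (G : SimpleGraph V) {m : ℕ} (x : ZMod m → V) (i : ZMod m)
    (y z u : V) : Prop :=
  y ∉ Set.range x ∧ z ∉ Set.range x ∧ u ∉ Set.range x ∧
  y ≠ z ∧ y ≠ u ∧ z ≠ u ∧
  G.Adj (x i) y ∧ G.Adj y z ∧ G.Adj z u ∧ ¬ G.Adj y u ∧
  (∀ j : ZMod m, G.Adj y (x j) ↔ j = i) ∧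
  (∀ j : ZMod m, ¬ G.Adj z (x j)) ∧
  (∀ j : ZMod m, ¬ G.Adj u (x j))

section Symmetry

variable {V : Type*} {G : SimpleGraph V} {m : ℕ} {x : ZMod m → V}

theorem range_comp_add_right (i : ZMod m) : Set.range (fun j => x (j + i)) = Set.range x :=
  (add_right_surjective i).range_comp x

theorem range_comp_neg : Set.range (fun j => x (-j)) = Set.range x :=
  neg_surjective.range_comp x

theorem IsCircInduced.comp_add_right (hx : IsCircInduced G m x) (i : ZMod m) :
    IsCircInduced G m (fun j => x (j + i)) := by
  refine ⟨hx.1.comp (add_left_injective i), fun a b => ?_⟩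
  rw [hx.2, add_right_comm a, add_right_comm b, add_left_inj, add_left_inj]

theorem IsCircInduced.comp_neg_s13 (hx : IsCircInduced G m x) :
    IsCircInduced G m (fun j => x (-j)) := by
  refine ⟨hx.1.comp neg_injective, fun a b => ?_⟩
  rw [hx.2, or_comm]
  refine Iff.or ?_ ?_ <;> constructor <;> intro h <;> linear_combination h

theorem ICset_comp_add_right (i : ZMod m) :
    ICset G m (fun j => x (j + i)) = (· + i) ⁻¹' ICset G m x := by
  ext j
  simp only [ICset, Set.mem_ofPred_eq, Set.mem_preimage, range_comp_add_right,
    add_right_comm j 1 i]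

theorem ICset_comp_neg :
    ICset G m (fun j => x (-j)) = (fun j => -j - 1) ⁻¹' ICset G m x := by
  ext j
  simp only [ICset, Set.mem_ofPred_eq, Set.mem_preimage, range_comp_neg, neg_add',
    sub_add_cancel]
  exact exists_congr fun _ => and_congr_right fun _ => and_comm

theorem ncard_ICset_comp_add_right (i : ZMod m) :
    (ICset G m (fun j => x (j + i))).ncard = (ICset G m x).ncard := by
  rw [ICset_comp_add_right]
  exact Set.ncard_preimage_of_injective_subset_range (add_left_injective i)
    (by simp [(add_right_surjective i).range_eq])

theorem ncard_ICset_comp_neg : (ICset G m (fun j => x (-j))).ncard = (ICset G m x).ncard := by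
  rw [ICset_comp_neg]
  refine Set.ncard_preimage_of_injective_subset_range (fun a b h => ?_) (fun j _ => ?_)
  · simpa using h
  · exact ⟨-j - 1, by ring⟩

theorem IsGoodHole.comp_add_right (hx : IsGoodHole G m x) (i : ZMod m) :
    IsGoodHole G m (fun j => x (j + i)) := by
  refine ⟨hx.1, hx.2.1.comp_add_right i, hx.2.2.1, fun w hw => ?_⟩
  rw [ncard_ICset_comp_add_right]
  exact hx.2.2.2 w hw

theorem IsGoodPath.of_comp_add_right {i : ZMod m} {y z u : V}
    (h : IsGoodPath G (fun j => x (j + i)) 0 y z u) :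
    IsGoodPath G x i y z u := by
  obtain ⟨hy, hz, hu, hyz, hyu, hzu, hxy, hyz', hzu', hyu', hyN, hzN, huN⟩ := h
  rw [range_comp_add_right] at hy hz hu
  refine ⟨hy, hz, hu, hyz, hyu, hzu, by simpa using hxy, hyz', hzu', hyu', fun j => ?_,
    fun j => by simpa using hzN (j - i), fun j => by simpa using huN (j - i)⟩
  simpa [sub_eq_zero] using hyN (j - i)

end Symmetry

section Pentagon

theorem zmod_five_cases : ∀ a : ZMod 5, a = 0 ∨ a = 1 ∨ a = 2 ∨ a = 3 ∨ a = 4 := by decide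

variable {V : Type*} {G : SimpleGraph V} {x : ZMod 5 → V}

theorem IsCircInduced.adj (hx : IsCircInduced G 5 x) (a b : ZMod 5)
    (h : b = a + 1 ∨ a = b + 1 := by decide) : G.Adj (x a) (x b) :=
  (hx.2 a b).2 h

theorem IsCircInduced.adj_add_four (hx : IsCircInduced G 5 x) (a : ZMod 5) :
    G.Adj (x (a + 4)) (x a) :=
  (hx.2 _ _).2 (Or.inl (by rw [add_assoc]; exact (add_eq_left.2 (by decide)).symm))

theorem notMem_range_five {w : ZMod 5 → V} {v : V} (h0 : w 0 ≠ v) (h1 : w 1 ≠ v)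
    (h2 : w 2 ≠ v) (h3 : w 3 ≠ v) (h4 : w 4 ≠ v) : v ∉ Set.range w := by
  rintro ⟨j, rfl⟩
  rcases zmod_five_cases j with rfl | rfl | rfl | rfl | rfl <;> simp_all

theorem isCircInduced_five {w : ZMod 5 → V} (h01 : G.Adj (w 0) (w 1)) (h12 : G.Adj (w 1) (w 2))
    (h23 : G.Adj (w 2) (w 3)) (h34 : G.Adj (w 3) (w 4)) (h40 : G.Adj (w 4) (w 0))
    (h02 : ¬ G.Adj (w 0) (w 2)) (h03 : ¬ G.Adj (w 0) (w 3)) (h13 : ¬ G.Adj (w 1) (w 3))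
    (h14 : ¬ G.Adj (w 1) (w 4)) (h24 : ¬ G.Adj (w 2) (w 4)) : IsCircInduced G 5 w := by
  refine ⟨fun a b hab => ?_, fun a b => ?_⟩
  · rcases zmod_five_cases a with rfl | rfl | rfl | rfl | rfl <;>
    rcases zmod_five_cases b with rfl | rfl | rfl | rfl | rfl <;>
    first | rfl | (exfalso; simp_all [G.adj_comm])
  · rcases zmod_five_cases a with rfl | rfl | rfl | rfl | rfl <;>
    rcases zmod_five_cases b with rfl | rfl | rfl | rfl | rfl <;>
    simp +decide [G.adj_comm, h40.symm, *]

theorem IsCircInduced.notMem_range_of_forall_not_adj (hx : IsCircInduced G 5 x) {v : V}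
    (hv : ∀ j, ¬ G.Adj v (x j)) : v ∉ Set.range x := by
  rintro ⟨k, rfl⟩
  exact hv (k + 1) (hx.adj k (k + 1) (Or.inl rfl))

theorem IsCircInduced.hasCycleLength_eight_of_path_succ (hx : IsCircInduced G 5 x) (a : ZMod 5)
    {p q r : V} (hp : p ∉ Set.range x) (hq : q ∉ Set.range x) (hr : r ∉ Set.range x)
    (hpr : p ≠ r) (hap : G.Adj (x a) p) (hpq : G.Adj p q) (hqr : G.Adj q r)
    (hrb : G.Adj r (x (a + 1))) : HasCycleLength G 8 := by
  simp only [Set.mem_range, not_exists] at hp hq hr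
  refine hasCycleLength_eight hap hpq hqr hrb (hx.adj (a + 1) (a + 2) (Or.inl (by ring)))
    (hx.adj (a + 2) (a + 3) (Or.inl (by ring))) (hx.adj (a + 3) (a + 4) (Or.inl (by ring)))
    (hx.adj_add_four a) ?_
  simp +decide [List.nodup_cons, hx.1.eq_iff, hp, hq, hr, hpr, hpq.ne, hqr.ne,
    eq_comm (a := p), eq_comm (a := q), eq_comm (a := r)]

theorem IsCircInduced.hasCycleLength_eight_of_path_add_two (hx : IsCircInduced G 5 x)
    (a : ZMod 5) {p q r s : V} (hp : p ∉ Set.range x) (hq : q ∉ Set.range x)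
    (hr : r ∉ Set.range x) (hs : s ∉ Set.range x) (hpr : p ≠ r) (hps : p ≠ s) (hqs : q ≠ s)
    (hap : G.Adj (x a) p) (hpq : G.Adj p q) (hqr : G.Adj q r) (hrs : G.Adj r s)
    (hsb : G.Adj s (x (a + 2))) : HasCycleLength G 8 := by
  simp only [Set.mem_range, not_exists] at hp hq hr hs
  refine hasCycleLength_eight hap hpq hqr hrs hsb (hx.adj (a + 2) (a + 3) (Or.inl (by ring)))
    (hx.adj (a + 3) (a + 4) (Or.inl (by ring))) (hx.adj_add_four a) ?_
  simp +decide [List.nodup_cons, hx.1.eq_iff, hp, hq, hr, hs, hpr, hps, hqs, hpq.ne, hqr.ne,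
    hrs.ne, eq_comm (a := p), eq_comm (a := q), eq_comm (a := r), eq_comm (a := s)]

/-- The cycle `x 0 p q r x 2 ⋯ x 0` that runs back along `C` but detours through `v` instead of
the edge `x a x (a + 1)`. -/
theorem IsCircInduced.hasCycleLength_eight_of_path_of_detour (hx : IsCircInduced G 5 x)
    {p q r v : V} (hp : p ∉ Set.range x) (hq : q ∉ Set.range x) (hr : r ∉ Set.range x)
    (hv : v ∉ Set.range x) (hpr : p ≠ r) (hpv : p ≠ v) (hqv : q ≠ v) (hrv : r ≠ v)
    (hp0 : G.Adj (x 0) p) (hpq : G.Adj p q) (hqr : G.Adj q r) (hr2 : G.Adj r (x 2))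
    {a : ZMod 5} (ha : a = 2 ∨ a = 3) (hav : G.Adj (x a) v) (hva : G.Adj v (x (a + 1))) :
    HasCycleLength G 8 := by
  simp only [Set.mem_range, not_exists] at hp hq hr hv
  rcases ha with rfl | rfl
  · refine hasCycleLength_eight hp0 hpq hqr hr2 hav hva (hx.adj 3 4) (hx.adj 4 0) ?_
    simp +decide [List.nodup_cons, hx.1.eq_iff, hp, hq, hr, hv, hpr, hpv, hqv, hrv, hpq.ne,
      hqr.ne, eq_comm (a := p), eq_comm (a := q), eq_comm (a := r), eq_comm (a := v)]
  · refine hasCycleLength_eight hp0 hpq hqr hr2 (hx.adj 2 3) hav hva (hx.adj 4 0) ?_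
    simp +decide [List.nodup_cons, hx.1.eq_iff, hp, hq, hr, hv, hpr, hpv, hqv, hrv, hpq.ne,
      hqr.ne, eq_comm (a := p), eq_comm (a := q), eq_comm (a := r), eq_comm (a := v)]

theorem IsCircInduced.adj_iff_of_adj_zero (hx : IsCircInduced G 5 x) (hC4 : ¬ HasCycleLength G 4)
    (h0 : 0 ∉ ICset G 5 x) (h4 : 4 ∉ ICset G 5 x) {v : V} (hv : v ∉ Set.range x)
    (hxv : G.Adj (x 0) v) (j : ZMod 5) : G.Adj v (x j) ↔ j = 0 := by
  refine ⟨fun h => ?_, by rintro rfl; exact hxv.symm⟩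
  have hvx : ∀ k, v ≠ x k := fun k hk => hv ⟨k, hk.symm⟩
  rcases zmod_five_cases j with rfl | rfl | rfl | rfl | rfl
  · rfl
  · exact absurd ⟨v, hv, hxv, h.symm⟩ h0
  · exact absurd (eq_of_common_neighbors hC4 (hx.1.ne (by decide)) hxv h (hx.adj 0 1) (hx.adj 1 2))
      (hvx 1)
  · exact absurd (eq_of_common_neighbors hC4 (hx.1.ne (by decide)) hxv h (hx.adj 0 4) (hx.adj 4 3))
      (hvx 4)
  · exact absurd ⟨v, hv, h.symm, hxv⟩ h4

theorem IsCircInduced.eq_zero_or_eq_two_or_eq_three_of_adj (hx : IsCircInduced G 5 x)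
    (hC4 : ¬ HasCycleLength G 4) {y t : V} (hy : y ∉ Set.range x) (hxy : G.Adj (x 0) y)
    (hyt : G.Adj y t) (ht0 : t ≠ x 0) {j : ZMod 5} (ht : G.Adj t (x j)) :
    j = 0 ∨ j = 2 ∨ j = 3 := by
  rcases zmod_five_cases j with rfl | rfl | rfl | rfl | rfl
  · exact Or.inl rfl
  · exact absurd (eq_of_common_neighbors hC4 (fun h => hy ⟨1, h.symm⟩) hyt ht hxy.symm
      (hx.adj 0 1)) ht0
  · exact Or.inr (Or.inl rfl)
  · exact Or.inr (Or.inr rfl)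
  · exact absurd (eq_of_common_neighbors hC4 (fun h => hy ⟨4, h.symm⟩) hyt ht hxy.symm
      (hx.adj 0 4)) ht0

theorem IsCircInduced.eq_two_or_eq_three_of_adj (hx : IsCircInduced G 5 x)
    (hC4 : ¬ HasCycleLength G 4) (hC8 : ¬ HasCycleLength G 8) {y z u : V}
    (hy : y ∉ Set.range x) (hxy : G.Adj (x 0) y) (hyz : G.Adj y z)
    (hzN : ∀ j, ¬ G.Adj z (x j)) (hzu : G.Adj z u) (huy : u ≠ y) {j : ZMod 5}
    (hu : G.Adj u (x j)) : j = 2 ∨ j = 3 := by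
  have hz := hx.notMem_range_of_forall_not_adj hzN
  have hu' : u ∉ Set.range x := fun ⟨k, hk⟩ => hzN k (hk ▸ hzu)
  rcases zmod_five_cases j with rfl | rfl | rfl | rfl | rfl
  · exact absurd (eq_of_common_neighbors hC4 (fun h => hz ⟨0, h⟩) hxy hyz hu.symm hzu.symm)
      huy.symm
  · exact absurd (hx.hasCycleLength_eight_of_path_succ 0 hy hz hu' huy.symm hxy hyz hzu hu) hC8
  · exact Or.inl rfl
  · exact Or.inr rfl
  · exact absurd (hx.hasCycleLength_eight_of_path_succ 4 hu' hz hy huy hu.symm hzu.symm hyz.symm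
      hxy.symm) hC8

theorem IsCircInduced.eq_one_or_eq_two_of_mem_ICset (hx : IsCircInduced G 5 x)
    (hC8 : ¬ HasCycleLength G 8) (h0 : 0 ∉ ICset G 5 x) (h4 : 4 ∉ ICset G 5 x) {y z s : V}
    (hy : y ∉ Set.range x) (hyN : ∀ j, G.Adj y (x j) ↔ j = 0)
    (hz : z ∉ Set.range x) (hzN : ∀ j, G.Adj z (x j) ↔ j = 0)
    (hs : s ∉ Set.range x) (hyz : G.Adj y z) (hys : G.Adj y s) (hs2 : G.Adj s (x 2))
    (hs4 : ¬ G.Adj s (x 4)) {j : ZMod 5} (hj : j ∈ ICset G 5 x) :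
    j = 1 ∨ j = 2 ∧ G.Adj s (x 3) := by
  have hzs : z ≠ s := (G.ne_of_adj_of_not_adj hs2 fun h => absurd ((hzN 2).1 h) (by decide)).symm
  have hC8' : ∀ {v a}, v ∉ Set.range x → a = 2 ∨ a = 3 → G.Adj (x a) v → G.Adj v (x (a + 1)) →
      s ≠ v → False := by
    intro v a hv ha hav hva hsv
    have ha0 : a ≠ 0 := by rcases ha with rfl | rfl <;> decide
    exact hC8 (hx.hasCycleLength_eight_of_path_of_detour hz hy hs hv hzs
      (G.ne_of_adj_of_not_adj hav.symm fun h => ha0 ((hzN a).1 h)).symm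
      (G.ne_of_adj_of_not_adj hav.symm fun h => ha0 ((hyN a).1 h)).symm hsv
      ((hzN 0).2 rfl).symm hyz.symm hys hs2 ha hav hva)
  rcases zmod_five_cases j with rfl | rfl | rfl | rfl | rfl
  · exact absurd hj h0
  · exact Or.inl rfl
  · obtain ⟨v, hv, h2v, h3v⟩ := hj
    by_contra hs3
    exact hC8' hv (Or.inl rfl) h2v h3v.symm
      (G.ne_of_adj_of_not_adj h3v.symm fun h => hs3 (Or.inr ⟨rfl, h⟩)).symm
  · obtain ⟨v, hv, h3v, h4v⟩ := hj
    exact (hC8' hv (Or.inr rfl) h3v h4v.symm (G.ne_of_adj_of_not_adj h4v.symm hs4).symm).elim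
  · exact absurd hj h4

theorem IsCircInduced.exists_ncard_lt_of_adj_two (hx : IsCircInduced G 5 x)
    (hC8 : ¬ HasCycleLength G 8) (h0 : 0 ∉ ICset G 5 x) (h4 : 4 ∉ ICset G 5 x) {y z s : V}
    (hy : y ∉ Set.range x) (hyN : ∀ j, G.Adj y (x j) ↔ j = 0)
    (hz : z ∉ Set.range x) (hzN : ∀ j, G.Adj z (x j) ↔ j = 0)
    (hs : s ∉ Set.range x) (hyz : G.Adj y z) (hys : G.Adj y s) (hs0 : ¬ G.Adj s (x 0))
    (hs1 : ¬ G.Adj s (x 1)) (hs2 : G.Adj s (x 2)) (hs4 : ¬ G.Adj s (x 4)) :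
    ∃ w, IsCircInduced G 5 w ∧ (ICset G 5 x).ncard < (ICset G 5 w).ncard := by
  have hyx : ∀ k ≠ 0, ¬ G.Adj y (x k) := fun k hk h => hk ((hyN k).1 h)
  -- `j ↦ -j` maps `I_C` into `I_w`, and `z` puts `1 ∈ I_w` outside its image.
  let w : ZMod 5 → V := ![x 1, x 0, y, s, x 2]
  have hw : IsCircInduced G 5 w := isCircInduced_five (hx.adj 1 0) ((hyN 0).2 rfl).symm hys hs2
    (hx.adj 2 1) (fun h => hyx 1 (by decide) h.symm) (fun h => hs1 h.symm)
    (fun h => hs0 h.symm) (fun h => absurd ((hx.2 0 2).1 h) (by decide)) (hyx 2 (by decide))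
  have h1w : 1 ∈ ICset G 5 w :=
    ⟨z, notMem_range_five (fun h => hz ⟨1, h⟩) (fun h => hz ⟨0, h⟩) hyz.ne
      (fun h => absurd ((hzN 2).1 (h ▸ hs2)) (by decide)) (fun h => hz ⟨2, h⟩),
      ((hzN 0).2 rfl).symm, hyz⟩
  have hneg : ∀ j ∈ ICset G 5 x, -j ∈ ICset G 5 w := by
    intro j hj
    rcases hx.eq_one_or_eq_two_of_mem_ICset hC8 h0 h4 hy hyN hz hzN hs hyz hys hs2 hs4 hj with
      rfl | ⟨rfl, hs3⟩
    · obtain ⟨v, hv, h1v, h2v⟩ := hj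
      exact ⟨v, notMem_range_five (fun h => hv ⟨1, h⟩) (fun h => hv ⟨0, h⟩)
        (G.ne_of_adj_of_not_adj h1v.symm (hyx 1 (by decide))).symm
        (G.ne_of_adj_of_not_adj h1v.symm hs1).symm (fun h => hv ⟨2, h⟩), h2v, h1v⟩
    · exact ⟨x 3, notMem_range_five (hx.1.ne (by decide)) (hx.1.ne (by decide))
        (fun h => hy ⟨3, h.symm⟩) (fun h => hs ⟨3, h.symm⟩) (hx.1.ne (by decide)), hs3, hx.adj 2 3⟩
  refine ⟨w, hw, ?_⟩
  calc (ICset G 5 x).ncard = (Neg.neg '' ICset G 5 x).ncard :=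
        (Set.ncard_image_of_injective _ neg_injective).symm
    _ < (ICset G 5 w).ncard := by
      refine Set.ncard_lt_ncard ((Set.ssubset_iff_of_subset ?_).2 ⟨1, h1w, ?_⟩)
      · rintro _ ⟨j, hj, rfl⟩
        exact hneg j hj
      · rintro ⟨j, hj, hj1⟩
        rw [neg_eq_iff_eq_neg.1 hj1] at hj
        exact h4 hj

theorem IsCircInduced.exists_ncard_lt_of_adj_three (hx : IsCircInduced G 5 x)
    (hC8 : ¬ HasCycleLength G 8) (h0 : 0 ∉ ICset G 5 x) (h4 : 4 ∉ ICset G 5 x) {y z s : V}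
    (hy : y ∉ Set.range x) (hyN : ∀ j, G.Adj y (x j) ↔ j = 0)
    (hz : z ∉ Set.range x) (hzN : ∀ j, G.Adj z (x j) ↔ j = 0)
    (hs : s ∉ Set.range x) (hyz : G.Adj y z) (hys : G.Adj y s) (hs0 : ¬ G.Adj s (x 0))
    (hs1 : ¬ G.Adj s (x 1)) (hs3 : G.Adj s (x 3)) (hs4 : ¬ G.Adj s (x 4)) :
    ∃ w, IsCircInduced G 5 w ∧ (ICset G 5 x).ncard < (ICset G 5 w).ncard := by
  rw [← ncard_ICset_comp_neg]
  refine hx.comp_neg_s13.exists_ncard_lt_of_adj_two hC8 ?_ ?_ (by rwa [range_comp_neg]) (fun j => ?_)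
    (by rwa [range_comp_neg]) (fun j => ?_) (by rwa [range_comp_neg]) hyz hys hs0 hs4 hs3 hs1
  · rw [ICset_comp_neg]
    exact h4
  · rw [ICset_comp_neg]
    exact h0
  · simpa using hyN (-j)
  · simpa using hzN (-j)

theorem IsCircInduced.eq_of_attached (hx : IsCircInduced G 5 x)
    (hC4 : ¬ HasCycleLength G 4) (hC8 : ¬ HasCycleLength G 8) {y z u₁ u₂ : V}
    (hy : y ∉ Set.range x) (hxy : G.Adj (x 0) y) (hyz : G.Adj y z)
    (hzN : ∀ j, ¬ G.Adj z (x j)) (hzu₁ : G.Adj z u₁) (hzu₂ : G.Adj z u₂) (hu₁y : u₁ ≠ y)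
    (hu₂y : u₂ ≠ y) (h₁ : G.Adj y u₁ ∨ G.Adj u₁ (x 2) ∨ G.Adj u₁ (x 3))
    (h₂ : G.Adj y u₂ ∨ G.Adj u₂ (x 2) ∨ G.Adj u₂ (x 3)) : u₁ = u₂ := by
  by_contra! hu₁₂
  have hz := hx.notMem_range_of_forall_not_adj hzN
  have hu₁ : u₁ ∉ Set.range x := fun ⟨k, hk⟩ => hzN k (hk ▸ hzu₁)
  have hu₂ : u₂ ∉ Set.range x := fun ⟨k, hk⟩ => hzN k (hk ▸ hzu₂)
  have hzx : ∀ k, x k ≠ z := fun k hk => hz ⟨k, hk⟩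
  rcases h₁ with h₁ | h₁ | h₁ <;> rcases h₂ with h₂ | h₂ | h₂
  · exact hu₁₂ (eq_of_common_neighbors hC4 hyz.ne h₁ hzu₁.symm h₂ hzu₂.symm)
  · exact hC8 (hx.hasCycleLength_eight_of_path_add_two 0 hy hu₁ hz hu₂ hyz.ne hu₂y.symm hu₁₂
      hxy h₁ hzu₁.symm hzu₂ h₂)
  · exact hC8 (hx.hasCycleLength_eight_of_path_add_two 3 hu₂ hz hu₁ hy hu₁₂.symm hu₂y hyz.ne'
      h₂.symm hzu₂.symm hzu₁ h₁.symm hxy.symm)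
  · exact hC8 (hx.hasCycleLength_eight_of_path_add_two 0 hy hu₂ hz hu₁ hyz.ne hu₁y.symm
      hu₁₂.symm hxy h₂ hzu₂.symm hzu₁ h₁)
  · exact hu₁₂ (eq_of_common_neighbors hC4 (hzx 2) h₁.symm hzu₁.symm h₂.symm hzu₂.symm)
  · exact hC8 (hx.hasCycleLength_eight_of_path_succ 2 hu₁ hz hu₂ hu₁₂ h₁.symm hzu₁.symm hzu₂ h₂)
  · exact hC8 (hx.hasCycleLength_eight_of_path_add_two 3 hu₁ hz hu₂ hy hu₁₂ hu₁y hyz.ne'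
      h₁.symm hzu₁.symm hzu₂ h₂.symm hxy.symm)
  · exact hC8 (hx.hasCycleLength_eight_of_path_succ 2 hu₂ hz hu₁ hu₁₂.symm h₂.symm hzu₂.symm
      hzu₁ h₁)
  · exact hu₁₂ (eq_of_common_neighbors hC4 (hzx 3) h₁.symm hzu₁.symm h₂.symm hzu₂.symm)

theorem IsCircInduced.exists_isGoodPath_of_forall_not_adj (hx : IsCircInduced G 5 x)
    (hC4 : ¬ HasCycleLength G 4) (hC8 : ¬ HasCycleLength G 8) {y z : V}
    [Fintype (G.neighborSet z)] (hy : y ∉ Set.range x) (hyN : ∀ j, G.Adj y (x j) ↔ j = 0)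
    (hyz : G.Adj y z) (hzN : ∀ j, ¬ G.Adj z (x j)) (hdeg : 3 ≤ G.degree z) :
    ∃ u, IsGoodPath G x 0 y z u := by
  have hxy : G.Adj (x 0) y := ((hyN 0).2 rfl).symm
  have hattached : ∀ u, G.Adj z u → u ≠ y → (∀ u, ¬ IsGoodPath G x 0 y z u) →
      G.Adj y u ∨ G.Adj u (x 2) ∨ G.Adj u (x 3) := by
    intro u hzu huy hbad
    by_contra! h
    refine hbad u ⟨hy, hx.notMem_range_of_forall_not_adj hzN, fun ⟨k, hk⟩ => hzN k (hk ▸ hzu),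
      hyz.ne, huy.symm, hzu.ne, hxy, hyz, hzu, h.1, hyN, hzN, fun j hj => ?_⟩
    rcases hx.eq_two_or_eq_three_of_adj hC4 hC8 hy hxy hyz hzN hzu huy hj with rfl | rfl
    exacts [h.2.1 hj, h.2.2 hj]
  by_contra! hbad
  obtain ⟨u₁, hzu₁, hu₁y, -⟩ := exists_adj_ne_ne hdeg y y
  obtain ⟨u₂, hzu₂, hu₂y, hu₂₁⟩ := exists_adj_ne_ne hdeg y u₁
  exact hu₂₁ (hx.eq_of_attached hC4 hC8 hy hxy hyz hzN hzu₁ hzu₂ hu₁y hu₂y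
    (hattached u₁ hzu₁ hu₁y hbad) (hattached u₂ hzu₂ hu₂y hbad)).symm

theorem IsGoodHole.false_of_adj_zero_of_adj_two_or_three (hgood : IsGoodHole G 5 x)
    (hC4 : ¬ HasCycleLength G 4) (hC8 : ¬ HasCycleLength G 8) (h0 : 0 ∉ ICset G 5 x)
    (h4 : 4 ∉ ICset G 5 x) {y z s : V} (hy : y ∉ Set.range x)
    (hyN : ∀ j, G.Adj y (x j) ↔ j = 0) (hyz : G.Adj y z) (hys : G.Adj y s) (hzs : z ≠ s)
    (hz : z ∉ Set.range x) (hz0 : G.Adj z (x 0)) (hs0 : s ≠ x 0)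
    (hs23 : G.Adj s (x 2) ∨ G.Adj s (x 3)) : False := by
  have hx := hgood.2.1
  have hxy : G.Adj (x 0) y := ((hyN 0).2 rfl).symm
  have hs : s ∉ Set.range x := by
    rintro ⟨k, rfl⟩
    exact hs0 (congrArg x ((hyN k).1 hys))
  have hsN := fun {j} => hx.eq_zero_or_eq_two_or_eq_three_of_adj hC4 hy hxy hys hs0 (j := j)
  have hzN := hx.adj_iff_of_adj_zero hC4 h0 h4 hz hz0.symm
  have hs0' : ¬ G.Adj s (x 0) := fun h =>
    hzs (eq_of_common_neighbors hC4 (fun e => hy ⟨0, e⟩) hz0.symm hyz.symm h.symm hys.symm)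
  have hs1 : ¬ G.Adj s (x 1) := fun h => absurd (hsN h) (by decide)
  have hs4 : ¬ G.Adj s (x 4) := fun h => absurd (hsN h) (by decide)
  obtain ⟨w, hw, hlt⟩ := hs23.elim
    (hx.exists_ncard_lt_of_adj_two hC8 h0 h4 hy hyN hz hzN hs hyz hys hs0' hs1 · hs4)
    (hx.exists_ncard_lt_of_adj_three hC8 h0 h4 hy hyN hz hzN hs hyz hys hs0' hs1 · hs4)
  exact (hgood.2.2.2 w hw).not_gt hlt

theorem IsGoodHole.false_of_forall_exists_adj (hgood : IsGoodHole G 5 x)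
    (hC4 : ¬ HasCycleLength G 4) (hC8 : ¬ HasCycleLength G 8) (h0 : 0 ∉ ICset G 5 x)
    (h4 : 4 ∉ ICset G 5 x) {y : V} [Fintype (G.neighborSet y)] (hy : y ∉ Set.range x)
    (hyN : ∀ j, G.Adj y (x j) ↔ j = 0) (hdeg : 3 ≤ G.degree y)
    (hattached : ∀ t, G.Adj y t → ∃ j, G.Adj t (x j)) : False := by
  have hx := hgood.2.1
  have hxy : G.Adj (x 0) y := ((hyN 0).2 rfl).symm
  have hunique : ∀ {k t t'}, G.Adj t (x k) → G.Adj t' (x k) → G.Adj y t → G.Adj y t' → t = t' :=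
    fun h h' hyt hyt' => eq_of_common_neighbors hC4 (fun e => hy ⟨_, e⟩) h.symm hyt.symm h'.symm
      hyt'.symm
  have ht : ∀ {t}, G.Adj y t → t ≠ x 0 → t ∉ Set.range x := by
    rintro t hyt ht0 ⟨k, rfl⟩
    exact ht0 (congrArg x ((hyN k).1 hyt))
  have hsees : ∀ {t}, G.Adj y t → t ≠ x 0 → G.Adj t (x 0) ∨ G.Adj t (x 2) ∨ G.Adj t (x 3) := by
    intro t hyt ht0
    obtain ⟨j, hj⟩ := hattached t hyt
    rcases hx.eq_zero_or_eq_two_or_eq_three_of_adj hC4 hy hxy hyt ht0 hj with rfl | rfl | rfl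
    exacts [Or.inl hj, Or.inr (Or.inl hj), Or.inr (Or.inr hj)]
  obtain ⟨t₁, hyt₁, ht₁0, -⟩ := exists_adj_ne_ne hdeg (x 0) (x 0)
  obtain ⟨t₂, hyt₂, ht₂0, ht₂₁⟩ := exists_adj_ne_ne hdeg (x 0) t₁
  rcases hsees hyt₁ ht₁0 with h₁ | h₁ | h₁ <;> rcases hsees hyt₂ ht₂0 with h₂ | h₂ | h₂
  · exact ht₂₁ (hunique h₂ h₁ hyt₂ hyt₁)
  · exact hgood.false_of_adj_zero_of_adj_two_or_three hC4 hC8 h0 h4 hy hyN hyt₁ hyt₂ ht₂₁.symm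
      (ht hyt₁ ht₁0) h₁ ht₂0 (Or.inl h₂)
  · exact hgood.false_of_adj_zero_of_adj_two_or_three hC4 hC8 h0 h4 hy hyN hyt₁ hyt₂ ht₂₁.symm
      (ht hyt₁ ht₁0) h₁ ht₂0 (Or.inr h₂)
  · exact hgood.false_of_adj_zero_of_adj_two_or_three hC4 hC8 h0 h4 hy hyN hyt₂ hyt₁ ht₂₁
      (ht hyt₂ ht₂0) h₂ ht₁0 (Or.inl h₁)
  · exact ht₂₁ (hunique h₂ h₁ hyt₂ hyt₁)
  · exact hC8 (hx.hasCycleLength_eight_of_path_succ 2 (ht hyt₁ ht₁0) hy (ht hyt₂ ht₂0)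
      ht₂₁.symm h₁.symm hyt₁.symm hyt₂ h₂)
  · exact hgood.false_of_adj_zero_of_adj_two_or_three hC4 hC8 h0 h4 hy hyN hyt₂ hyt₁ ht₂₁
      (ht hyt₂ ht₂0) h₂ ht₁0 (Or.inr h₁)
  · exact hC8 (hx.hasCycleLength_eight_of_path_succ 2 (ht hyt₂ ht₂0) hy (ht hyt₁ ht₁0)
      ht₂₁ h₂.symm hyt₂.symm hyt₁ h₁)
  · exact ht₂₁ (hunique h₂ h₁ hyt₂ hyt₁)

theorem IsGoodHole.exists_isGoodPath_zero [Fintype V] [DecidableRel G.Adj]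
    (hgood : IsGoodHole G 5 x) (hdeg : ∀ v, 3 ≤ G.degree v) (hC4 : ¬ HasCycleLength G 4)
    (hC8 : ¬ HasCycleLength G 8) (h0 : 0 ∉ ICset G 5 x) (h4 : 4 ∉ ICset G 5 x) :
    ∃ y z u, IsGoodPath G x 0 y z u := by
  have hx := hgood.2.1
  obtain ⟨y, hxy, hy1, hy4⟩ := exists_adj_ne_ne (hdeg (x 0)) (x 1) (x 4)
  have hy : y ∉ Set.range x := by
    rintro ⟨k, rfl⟩
    rcases (hx.2 0 k).1 hxy with rfl | h
    · exact hy1 rfl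
    · exact hy4 (congrArg x (eq_neg_of_add_eq_zero_left h.symm))
  have hyN := hx.adj_iff_of_adj_zero hC4 h0 h4 hy hxy
  by_cases hclean : ∃ z, G.Adj y z ∧ ∀ j, ¬ G.Adj z (x j)
  · obtain ⟨z, hyz, hzN⟩ := hclean
    obtain ⟨u, hu⟩ := hx.exists_isGoodPath_of_forall_not_adj hC4 hC8 hy hyN hyz hzN (hdeg z)
    exact ⟨y, z, u, hu⟩
  · push Not at hclean
    exact (hgood.false_of_forall_exists_adj hC4 hC8 h0 h4 hy hyN (hdeg y) hclean).elim

end Pentagon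

theorem stmt_13_general {V : Type*} [Fintype V] (G : SimpleGraph V) [DecidableRel G.Adj]
    (hdeg : ∀ v : V, 3 ≤ G.degree v)
    (hC4 : ¬ HasCycleLength G 4) (hC8 : ¬ HasCycleLength G 8)
    (x : ZMod 5 → V) (hgood : IsGoodHole G 5 x) :
    ∀ i : ZMod 5, i ∉ ICset G 5 x → i - 1 ∉ ICset G 5 x →
      ∃ y z u : V,
        y ∉ Set.range x ∧ z ∉ Set.range x ∧ u ∉ Set.range x ∧
        y ≠ z ∧ y ≠ u ∧ z ≠ u ∧
        G.Adj (x i) y ∧ G.Adj y z ∧ G.Adj z u ∧ ¬ G.Adj y u ∧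
        (∀ j : ZMod 5, G.Adj y (x j) ↔ j = i) ∧
        (∀ j : ZMod 5, ¬ G.Adj z (x j)) ∧
        (∀ j : ZMod 5, ¬ G.Adj u (x j)) := by
  intro i hi hi'
  have h0 : (0 : ZMod 5) ∉ ICset G 5 (fun j => x (j + i)) := by
    rwa [ICset_comp_add_right, Set.mem_preimage, zero_add]
  have h4 : (4 : ZMod 5) ∉ ICset G 5 (fun j => x (j + i)) := by
    have h41 : (4 : ZMod 5) + i = i - 1 := by rw [sub_eq_add_neg, add_comm i]; rfl
    rwa [ICset_comp_add_right, Set.mem_preimage, h41]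
  obtain ⟨y, z, u, h⟩ := (hgood.comp_add_right i).exists_isGoodPath_zero hdeg hC4 hC8 h0 h4
  exact ⟨y, z, u, h.of_comp_add_right⟩

theorem stmt_13 {V : Type*} [Fintype V] (G : SimpleGraph V) [DecidableRel G.Adj]
    (hdeg : ∀ v : V, 3 ≤ G.degree v) (hP10 : P10Free G)
    (hC4 : ¬ HasCycleLength G 4) (hC8 : ¬ HasCycleLength G 8)
    (x : ZMod 5 → V) (hgood : IsGoodHole G 5 x) :
    ∀ i : ZMod 5, i ∉ ICset G 5 x → i - 1 ∉ ICset G 5 x →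
      ∃ y z u : V,
        y ∉ Set.range x ∧ z ∉ Set.range x ∧ u ∉ Set.range x ∧
        y ≠ z ∧ y ≠ u ∧ z ≠ u ∧
        G.Adj (x i) y ∧ G.Adj y z ∧ G.Adj z u ∧ ¬ G.Adj y u ∧
        (∀ j : ZMod 5, G.Adj y (x j) ↔ j = i) ∧
        (∀ j : ZMod 5, ¬ G.Adj z (x j)) ∧
        (∀ j : ZMod 5, ¬ G.Adj u (x j)) :=
  stmt_13_general G hdeg hC4 hC8 x hgood
end

section
/- Let G be a P_{10}-free graph with minimum degree at least 3 that contains neither C_4 nor C_8, and let C be a good hole of G. Then ℓ(C) ≠ 6; combined with the bound ℓ(C) ≤ 6, every good hole of such a graph has length exactly 5. -/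
open SimpleGraph

/-!
In a C4-free graph without 5-holes every 5-cycle and every 6-cycle is induced, and without
8-cycles at most one edge of a 6-hole `h0 … h5` lies in a triangle: triangles on two edges would
reroute the hexagon into an 8-cycle. Minimum degree 3 gives each `hi` a neighbour `yi` off the
hexagon, and `yi` a neighbour `b` with no neighbour on the hexagon. Splitting according to whether
some 6-hole has an edge in a triangle, and then according to the few adjacencies among these
vertices that C4-, C5- and C8-freeness leave open, every branch produces an induced path on ten
vertices such as `u b y2 h2 h1 h0 h5 h4 y4 c`, a forbidden cycle, or a 6-hole with two triangle
edges.
-/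

namespace GoodHole

variable {V : Type*} {G : SimpleGraph V}

theorem hasCycleLength_of_injective {n : ℕ} (f : Fin (n + 3) → V) (hf : Function.Injective f)
    (hadj : ∀ i, G.Adj (f i) (f (i + 1))) : HasCycleLength G (n + 3) := by
  refine (cycleGraph_isContained_iff (by omega)).1 ⟨⟨⟨f, fun {a b} hab => ?_⟩, hf⟩⟩
  rcases cycleGraph_adj.1 hab with h | h
  · rw [← sub_add_cancel a b, h, add_comm]
    exact (hadj b).symm
  · rw [← sub_add_cancel b a, h, add_comm]
    exact hadj a

theorem exists_isHole_length_five {a b c d e : V} (hab : G.Adj a b) (hbc : G.Adj b c)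
    (hcd : G.Adj c d) (hde : G.Adj d e) (hea : G.Adj e a) (hac : ¬ G.Adj a c)
    (had : ¬ G.Adj a d) (hbd : ¬ G.Adj b d) (hbe : ¬ G.Adj b e) (hce : ¬ G.Adj c e) :
    ∃ (w : V) (p : G.Walk w w), IsHole G p ∧ p.length = 5 := by
  refine ⟨a, .cons hab (.cons hbc (.cons hcd (.cons hde (.cons hea .nil)))), ⟨?_, ?_⟩, rfl⟩
  · rw [Walk.cons_isCycle_iff, Walk.isPath_def]
    simp only [Walk.support_cons, Walk.support_nil, Walk.edges_cons, Walk.edges_nil,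
      List.nodup_cons, List.mem_cons, List.not_mem_nil, List.nodup_nil, Sym2.eq, Sym2.rel_iff',
      Prod.mk.injEq, Prod.swap_prod_mk, not_or, or_false]
    and_intros <;> grind [SimpleGraph.adj_comm, SimpleGraph.irrefl]
  · simp only [Walk.support_cons, Walk.support_nil, Walk.edges_cons, Walk.edges_nil,
      List.mem_cons, List.not_mem_nil, or_false]
    rintro u v (rfl | rfl | rfl | rfl | rfl | rfl) (rfl | rfl | rfl | rfl | rfl | rfl) huv <;>
      first
        | exact (G.irrefl huv).elim | exact absurd huv ‹_› | exact absurd huv.symm ‹_›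
        | simp [Sym2.eq_swap]

theorem exists_adj_ne_ne [Fintype V] [DecidableRel G.Adj] (hdeg : ∀ v : V, 3 ≤ G.degree v)
    (v a b : V) : ∃ w, G.Adj v w ∧ w ≠ a ∧ w ≠ b := by
  classical
  have hcard : ({a, b} : Finset V).card < (G.neighborFinset v).card := by
    rw [card_neighborFinset_eq_degree]
    exact Finset.card_le_two.trans_lt (hdeg v)
  obtain ⟨w, hw, hwab⟩ := Finset.exists_mem_notMem_of_card_lt_card hcard
  simp only [Finset.mem_insert, Finset.mem_singleton, not_or] at hwab
  exact ⟨w, (mem_neighborFinset G v w).1 hw, hwab⟩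

structure Admissible (G : SimpleGraph V) : Prop where
  not_hasCycleLength_four : ¬ HasCycleLength G 4
  not_hasCycleLength_eight : ¬ HasCycleLength G 8
  not_isHole_five : ¬ ∃ (w : V) (p : G.Walk w w), IsHole G p ∧ p.length = 5
  p10Free : P10Free G
  exists_adj_ne : ∀ v a b : V, ∃ w, G.Adj v w ∧ w ≠ a ∧ w ≠ b

@[grind cases eager]
structure Hexagon (G : SimpleGraph V) (h0 h1 h2 h3 h4 h5 : V) : Prop where
  adj01 : G.Adj h0 h1
  adj12 : G.Adj h1 h2
  adj23 : G.Adj h2 h3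
  adj34 : G.Adj h3 h4
  adj45 : G.Adj h4 h5
  adj50 : G.Adj h5 h0
  not02 : ¬ G.Adj h0 h2
  not03 : ¬ G.Adj h0 h3
  not04 : ¬ G.Adj h0 h4
  not13 : ¬ G.Adj h1 h3
  not14 : ¬ G.Adj h1 h4
  not15 : ¬ G.Adj h1 h5
  not24 : ¬ G.Adj h2 h4
  not25 : ¬ G.Adj h2 h5
  not35 : ¬ G.Adj h3 h5

@[grind cases eager]
structure Pendant (G : SimpleGraph V) (h0 h1 h2 h3 h4 h5 y : V) : Prop where
  adj0 : G.Adj y h0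
  not1 : ¬ G.Adj y h1
  not2 : ¬ G.Adj y h2
  not3 : ¬ G.Adj y h3
  not4 : ¬ G.Adj y h4
  not5 : ¬ G.Adj y h5

@[grind cases eager]
structure Distant (G : SimpleGraph V) (h0 h1 h2 h3 h4 h5 y b : V) : Prop where
  adj : G.Adj b y
  not0 : ¬ G.Adj b h0
  not1 : ¬ G.Adj b h1
  not2 : ¬ G.Adj b h2
  not3 : ¬ G.Adj b h3
  not4 : ¬ G.Adj b h4
  not5 : ¬ G.Adj b h5

def TriangleFreeHexagons (G : SimpleGraph V) : Prop :=
  ∀ h0 h1 h2 h3 h4 h5 w : V, Hexagon G h0 h1 h2 h3 h4 h5 → G.Adj w h0 → ¬ G.Adj w h1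

@[grind cases eager]
structure TriangleSetup (G : SimpleGraph V) (h0 h1 h2 h3 h4 h5 t y1 y2 y3 y4 : V) : Prop where
  hex : Hexagon G h0 h1 h2 h3 h4 h5
  adj_t5 : G.Adj t h5
  adj_t0 : G.Adj t h0
  pend1 : Pendant G h1 h2 h3 h4 h5 h0 y1
  pend2 : Pendant G h2 h3 h4 h5 h0 h1 y2
  pend3 : Pendant G h3 h4 h5 h0 h1 h2 y3
  pend4 : Pendant G h4 h5 h0 h1 h2 h3 y4
  not_t1 : ¬ G.Adj t h1
  not_t2 : ¬ G.Adj t h2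
  not_t3 : ¬ G.Adj t h3
  not_t4 : ¬ G.Adj t h4
  not_ty1 : ¬ G.Adj t y1
  not_ty2 : ¬ G.Adj t y2
  not_ty3 : ¬ G.Adj t y3
  not_ty4 : ¬ G.Adj t y4
  not_y12 : ¬ G.Adj y1 y2
  not_y13 : ¬ G.Adj y1 y3
  not_y23 : ¬ G.Adj y2 y3
  not_y24 : ¬ G.Adj y2 y4
  not_y34 : ¬ G.Adj y3 y4

variable {h0 h1 h2 h3 h4 h5 y b : V}

theorem Hexagon.rotate (H : Hexagon G h0 h1 h2 h3 h4 h5) : Hexagon G h1 h2 h3 h4 h5 h0 := by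
  constructor <;> grind [SimpleGraph.adj_comm]

theorem Hexagon.reflect (H : Hexagon G h0 h1 h2 h3 h4 h5) : Hexagon G h0 h5 h4 h3 h2 h1 := by
  constructor <;> grind [SimpleGraph.adj_comm]

theorem Pendant.reflect (hy : Pendant G h0 h1 h2 h3 h4 h5 y) : Pendant G h0 h5 h4 h3 h2 h1 y :=
  ⟨hy.adj0, hy.not5, hy.not4, hy.not3, hy.not2, hy.not1⟩

theorem Distant.reflect (hb : Distant G h0 h1 h2 h3 h4 h5 y b) :
    Distant G h0 h5 h4 h3 h2 h1 y b :=
  ⟨hb.adj, hb.not0, hb.not5, hb.not4, hb.not3, hb.not2, hb.not1⟩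

theorem hexagon_of_isCircInduced {x : ZMod 6 → V} (hx : IsCircInduced G 6 x) :
    Hexagon G (x 0) (x 1) (x 2) (x 3) (x 4) (x 5) := by
  constructor <;> simp only [hx.2] <;> decide

namespace Admissible

variable (K : Admissible G)
include K

/- Hypotheses with a default tactic are discharged by `grind` from the adjacency facts and the
(eagerly destructured) structures in the caller's context, so a use such as
`K.not_cycle8 b y4 h4 h5 h0 h1 h2 y2` only names the cycle. -/

theorem not_cycle4 (a b c d : V)
    (hadj : G.Adj a b ∧ G.Adj b c ∧ G.Adj c d ∧ G.Adj d a := by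
      grind (splits := 50) [SimpleGraph.adj_comm])
    (hne : a ≠ c ∧ b ≠ d := by grind (splits := 50) [SimpleGraph.adj_comm, SimpleGraph.irrefl]) :
    False := by
  obtain ⟨_, _, _, _⟩ := hadj
  refine K.not_hasCycleLength_four (hasCycleLength_of_injective (n := 1) ![a, b, c, d]
    (List.nodup_ofFn.1 ?_) (by intro i; fin_cases i <;> simpa))
  simp only [List.ofFn_succ, Matrix.cons_val_zero, Matrix.cons_val_succ, List.ofFn_zero,
    List.nodup_cons, List.mem_cons, List.not_mem_nil, or_false, not_or, List.nodup_nil, and_true]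
  grind (splits := 50) [SimpleGraph.adj_comm, SimpleGraph.irrefl]

theorem not_cycle5 (a b c d e : V)
    (hadj : G.Adj a b ∧ G.Adj b c ∧ G.Adj c d ∧ G.Adj d e ∧ G.Adj e a := by
      grind (splits := 50) [SimpleGraph.adj_comm])
    (hnd : [a, b, c, d, e].Nodup := by
      simp only [List.nodup_cons, List.mem_cons, List.not_mem_nil, or_false, not_or,
        List.nodup_nil, and_true]
      grind (splits := 50) [SimpleGraph.adj_comm, SimpleGraph.irrefl]) :
    False := by
  obtain ⟨hab, hbc, hcd, hde, hea⟩ := hadj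
  simp only [List.nodup_cons, List.mem_cons, List.not_mem_nil, or_false, not_or,
    List.nodup_nil, and_true] at hnd
  obtain ⟨⟨_, _, _, _⟩, ⟨_, _, _⟩, ⟨_, _⟩, _⟩ := hnd
  exact K.not_isHole_five (exists_isHole_length_five hab hbc hcd hde hea
    (fun _ => K.not_cycle4 a c d e) (fun _ => K.not_cycle4 a b c d) (fun _ => K.not_cycle4 b d e a)
    (fun _ => K.not_cycle4 b c d e) (fun _ => K.not_cycle4 c e a b))

theorem not_cycle8 (a b c d e f g h : V)
    (hadj : G.Adj a b ∧ G.Adj b c ∧ G.Adj c d ∧ G.Adj d e ∧ G.Adj e f ∧ G.Adj f g ∧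
      G.Adj g h ∧ G.Adj h a := by
      grind (splits := 50) [SimpleGraph.adj_comm])
    (hnd : [a, b, c, d, e, f, g, h].Nodup := by
      simp only [List.nodup_cons, List.mem_cons, List.not_mem_nil, or_false, not_or,
        List.nodup_nil, and_true]
      grind (splits := 50) [SimpleGraph.adj_comm, SimpleGraph.irrefl]) :
    False := by
  obtain ⟨_, _, _, _, _, _, _, _⟩ := hadj
  exact K.not_hasCycleLength_eight (hasCycleLength_of_injective (n := 5) ![a, b, c, d, e, f, g, h]
    (List.nodup_ofFn.1 (by simpa using hnd)) (by intro i; fin_cases i <;> simpa))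

theorem not_path10 (v0 v1 v2 v3 v4 v5 v6 v7 v8 v9 : V)
    (hadj : G.Adj v0 v1 ∧ G.Adj v1 v2 ∧ G.Adj v2 v3 ∧ G.Adj v3 v4 ∧ G.Adj v4 v5 ∧
      G.Adj v5 v6 ∧ G.Adj v6 v7 ∧ G.Adj v7 v8 ∧ G.Adj v8 v9 := by
      grind (splits := 50) [SimpleGraph.adj_comm])
    (hnon : ¬ G.Adj v0 v2 ∧ ¬ G.Adj v0 v3 ∧ ¬ G.Adj v0 v4 ∧ ¬ G.Adj v0 v5 ∧ ¬ G.Adj v0 v6 ∧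
      ¬ G.Adj v0 v7 ∧ ¬ G.Adj v0 v8 ∧ ¬ G.Adj v0 v9 ∧ ¬ G.Adj v1 v3 ∧ ¬ G.Adj v1 v4 ∧
      ¬ G.Adj v1 v5 ∧ ¬ G.Adj v1 v6 ∧ ¬ G.Adj v1 v7 ∧ ¬ G.Adj v1 v8 ∧ ¬ G.Adj v1 v9 ∧
      ¬ G.Adj v2 v4 ∧ ¬ G.Adj v2 v5 ∧ ¬ G.Adj v2 v6 ∧ ¬ G.Adj v2 v7 ∧ ¬ G.Adj v2 v8 ∧
      ¬ G.Adj v2 v9 ∧ ¬ G.Adj v3 v5 ∧ ¬ G.Adj v3 v6 ∧ ¬ G.Adj v3 v7 ∧ ¬ G.Adj v3 v8 ∧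
      ¬ G.Adj v3 v9 ∧ ¬ G.Adj v4 v6 ∧ ¬ G.Adj v4 v7 ∧ ¬ G.Adj v4 v8 ∧ ¬ G.Adj v4 v9 ∧
      ¬ G.Adj v5 v7 ∧ ¬ G.Adj v5 v8 ∧ ¬ G.Adj v5 v9 ∧ ¬ G.Adj v6 v8 ∧ ¬ G.Adj v6 v9 ∧
      ¬ G.Adj v7 v9 := by
      grind (splits := 50) [SimpleGraph.adj_comm]) :
    False := by
  obtain ⟨_, _, _, _, _, _, _, _, _⟩ := hadj
  obtain ⟨_, _, _, _, _, _, _, _, _, _, _, _, _, _, _, _, _, _, _, _, _, _, _, _, _, _, _, _, _, _,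
    _, _, _, _, _, _⟩ := hnon
  refine K.p10Free ⟨![v0, v1, v2, v3, v4, v5, v6, v7, v8, v9], List.nodup_ofFn.1 ?_,
    fun a b => ?_⟩
  · simp only [List.ofFn_succ, Matrix.cons_val_zero, Matrix.cons_val_succ, List.ofFn_zero,
      List.nodup_cons, List.mem_cons, List.not_mem_nil, or_false, not_or, List.nodup_nil, and_true]
    grind (splits := 50) [SimpleGraph.adj_comm, SimpleGraph.irrefl]
  · fin_cases a <;> fin_cases b <;>
      simp only [Fin.isValue, Fin.mk_one, Fin.reduceFinMk, Fin.zero_eta, Matrix.cons_val,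
        Matrix.cons_val_one, Matrix.cons_val_zero, Nat.reduceAdd, Nat.reduceEqDiff,
        Nat.succ_ne_self, SimpleGraph.irrefl, iff_false, iff_true, one_ne_zero, or_false, or_self,
        or_true, zero_add] <;>
      grind [SimpleGraph.adj_comm, SimpleGraph.irrefl]

theorem exists_adj_avoiding {p q r s : V} (hr : r ≠ p) (hs : s ≠ p) :
    (∃ u, G.Adj p u ∧ u ≠ q ∧ ¬ G.Adj u r ∧ ¬ G.Adj u s) ∨
      ∃ u₁ u₂, G.Adj p u₁ ∧ G.Adj p u₂ ∧ u₁ ≠ q ∧ u₂ ≠ q ∧ u₁ ≠ u₂ ∧ G.Adj u₁ r ∧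
        G.Adj u₂ s := by
  obtain ⟨u₁, hu₁, hu₁q, -⟩ := K.exists_adj_ne p q q
  obtain ⟨u₂, hu₂, hu₂q, hu₂₁⟩ := K.exists_adj_ne p q u₁
  by_cases h₁ : ¬ G.Adj u₁ r ∧ ¬ G.Adj u₁ s
  · exact .inl ⟨u₁, hu₁, hu₁q, h₁⟩
  by_cases h₂ : ¬ G.Adj u₂ r ∧ ¬ G.Adj u₂ s
  · exact .inl ⟨u₂, hu₂, hu₂q, h₂⟩
  simp only [not_and_or, not_not] at h₁ h₂
  rcases h₁ with h₁ | h₁ <;> rcases h₂ with h₂ | h₂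
  · exact (K.not_cycle4 u₁ r u₂ p).elim
  · exact .inr ⟨u₁, u₂, hu₁, hu₂, hu₁q, hu₂q, hu₂₁.symm, h₁, h₂⟩
  · exact .inr ⟨u₂, u₁, hu₂, hu₁, hu₂q, hu₁q, hu₂₁, h₂, h₁⟩
  · exact (K.not_cycle4 u₁ s u₂ p).elim

theorem exists_adj_not_adj {p q : V} (hpq : G.Adj p q) :
    ∃ u, G.Adj p u ∧ u ≠ q ∧ ¬ G.Adj u q := by
  rcases K.exists_adj_avoiding (q := q) hpq.ne' hpq.ne' with ⟨u, hu, huq, hnu, -⟩ | ⟨u₁, u₂, h⟩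
  · exact ⟨u, hu, huq, hnu⟩
  · obtain ⟨_, _, -, -, _, _, _⟩ := h
    exact (K.not_cycle4 u₁ q u₂ p).elim

theorem hexagon (h0 h1 h2 h3 h4 h5 : V)
    (hadj : G.Adj h0 h1 ∧ G.Adj h1 h2 ∧ G.Adj h2 h3 ∧ G.Adj h3 h4 ∧ G.Adj h4 h5 ∧
      G.Adj h5 h0 := by
      grind (splits := 50) [SimpleGraph.adj_comm])
    (hnd : [h0, h1, h2, h3, h4, h5].Nodup := by
      simp only [List.nodup_cons, List.mem_cons, List.not_mem_nil, or_false, not_or,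
        List.nodup_nil, and_true]
      grind (splits := 50) [SimpleGraph.adj_comm, SimpleGraph.irrefl]) :
    Hexagon G h0 h1 h2 h3 h4 h5 := by
  obtain ⟨_, _, _, _, _, _⟩ := hadj
  simp only [List.nodup_cons, List.mem_cons, List.not_mem_nil, or_false, not_or,
    List.nodup_nil, and_true] at hnd
  obtain ⟨⟨_, _, _, _, _⟩, ⟨_, _, _, _⟩, ⟨_, _, _⟩, ⟨_, _⟩, _⟩ := hnd
  exact ⟨‹_›, ‹_›, ‹_›, ‹_›, ‹_›, ‹_›, fun _ => K.not_cycle5 h0 h2 h3 h4 h5,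
    fun _ => K.not_cycle4 h0 h1 h2 h3, fun _ => K.not_cycle5 h0 h1 h2 h3 h4,
    fun _ => K.not_cycle5 h1 h3 h4 h5 h0, fun _ => K.not_cycle4 h1 h2 h3 h4,
    fun _ => K.not_cycle5 h1 h2 h3 h4 h5, fun _ => K.not_cycle5 h2 h4 h5 h0 h1,
    fun _ => K.not_cycle4 h2 h3 h4 h5, fun _ => K.not_cycle5 h3 h5 h0 h1 h2⟩

section Pendants

variable (H : Hexagon G h0 h1 h2 h3 h4 h5) {w z : V}
include H

theorem not_triangles_01_12 (hw0 : G.Adj w h0) (hw1 : G.Adj w h1) (hz1 : G.Adj z h1)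
    (hz2 : G.Adj z h2) : False := by
  have : ¬ G.Adj z h0 := fun _ => K.not_cycle4 z h0 h1 h2
  exact K.not_cycle8 w h0 h5 h4 h3 h2 z h1

theorem not_triangles_01_23 (hw0 : G.Adj w h0) (hw1 : G.Adj w h1) (hz2 : G.Adj z h2)
    (hz3 : G.Adj z h3) : False := by
  have : ¬ G.Adj z h1 := fun _ => K.not_cycle4 z h1 h2 h3
  have : ¬ G.Adj z h0 := fun _ => K.not_cycle5 z h0 h1 h2 h3
  exact K.not_cycle8 w h1 h2 z h3 h4 h5 h0

theorem not_triangles_01_34 (hw0 : G.Adj w h0) (hw1 : G.Adj w h1) (hz3 : G.Adj z h3)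
    (hz4 : G.Adj z h4) : False := by
  have : ¬ G.Adj z h0 := fun _ => K.not_cycle4 z h0 h5 h4
  exact K.not_cycle8 w h1 h2 h3 z h4 h5 h0

theorem exists_pendant (h01 : ∀ z, G.Adj z h0 → ¬ G.Adj z h1)
    (h50 : ∀ z, G.Adj z h5 → ¬ G.Adj z h0) : ∃ y, Pendant G h0 h1 h2 h3 h4 h5 y := by
  obtain ⟨y, hy, hy1, hy5⟩ := K.exists_adj_ne h0 h1 h5
  have : ¬ G.Adj y h1 := h01 y hy.symm
  have : ¬ G.Adj y h5 := fun h => h50 y h hy.symm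
  exact ⟨y, hy.symm, ‹_›, fun _ => K.not_cycle4 y h2 h1 h0, fun _ => K.not_cycle5 y h3 h2 h1 h0,
    fun _ => K.not_cycle4 y h4 h5 h0, ‹_›⟩

theorem not_adj_of_adj_pendant (hy : Pendant G h0 h1 h2 h3 h4 h5 y) (hw : G.Adj y w)
    (hw0 : w ≠ h0) : ¬ G.Adj w h1 ∧ ¬ G.Adj w h2 ∧ ¬ G.Adj w h4 ∧ ¬ G.Adj w h5 := by
  have : ¬ G.Adj w h1 := fun _ => K.not_cycle4 w h1 h0 y
  have : ¬ G.Adj w h5 := fun _ => K.not_cycle4 w h5 h0 y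
  refine ⟨‹_›, fun _ => ?_, fun _ => ?_, ‹_›⟩ <;> by_cases G.Adj w h0
  · exact K.not_cycle4 w h0 h1 h2
  · exact K.not_cycle5 w h2 h1 h0 y
  · exact K.not_cycle4 w h0 h5 h4
  · exact K.not_cycle5 w h4 h5 h0 y

/- A neighbour of `y` adjacent to `h0` and another adjacent to `h3` would make `y h0` a triangle
edge of the two hexagons in `hT`. -/
theorem exists_distant (hy : Pendant G h0 h1 h2 h3 h4 h5 y)
    (hT : ∀ w u, Hexagon G y h0 h1 h2 h3 w → Hexagon G y h0 h5 h4 h3 w → G.Adj u y →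
      G.Adj u h0 → False) :
    ∃ b, Distant G h0 h1 h2 h3 h4 h5 y b := by
  rcases K.exists_adj_avoiding (p := y) (q := h0) (r := h0) (s := h3) hy.adj0.ne' (by grind)
    with ⟨b, hb, hb0, hn0, hn3⟩ | ⟨u, w, hu, hw, _, hw0, _, hu0, _⟩
  · obtain ⟨_, _, _, _⟩ := K.not_adj_of_adj_pendant H hy hb hb0
    exact ⟨b, hb.symm, hn0, ‹_›, ‹_›, hn3, ‹_›, ‹_›⟩
  · obtain ⟨_, _, _, _⟩ := K.not_adj_of_adj_pendant H hy hw hw0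
    have : ¬ G.Adj w h0 := fun _ => K.not_cycle5 w h0 h1 h2 h3
    exact (hT w u (K.hexagon y h0 h1 h2 h3 w) (K.hexagon y h0 h5 h4 h3 w) hu.symm hu0).elim

end Pendants

section TriangleCase

variable {t y1 y2 y3 y4 c : V}

theorem exists_triangleSetup (H : Hexagon G h0 h1 h2 h3 h4 h5) (ht5 : G.Adj t h5)
    (ht0 : G.Adj t h0) : ∃ y1 y2 y3 y4, TriangleSetup G h0 h1 h2 h3 h4 h5 t y1 y2 y3 y4 := by
  have f01 : ∀ z, G.Adj z h0 → ¬ G.Adj z h1 :=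
    fun z => K.not_triangles_01_12 H.reflect.rotate.reflect ht5 ht0
  have f12 : ∀ z, G.Adj z h1 → ¬ G.Adj z h2 :=
    fun z => K.not_triangles_01_23 H.reflect.rotate.reflect ht5 ht0
  have f23 : ∀ z, G.Adj z h2 → ¬ G.Adj z h3 :=
    fun z h h' => K.not_triangles_01_34 H.reflect ht0 ht5 h' h
  have f34 : ∀ z, G.Adj z h3 → ¬ G.Adj z h4 :=
    fun z h h' => K.not_triangles_01_23 H.reflect ht0 ht5 h' h
  have f45 : ∀ z, G.Adj z h4 → ¬ G.Adj z h5 :=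
    fun z h h' => K.not_triangles_01_12 H.reflect ht0 ht5 h' h
  obtain ⟨y1, hy1⟩ := K.exists_pendant H.rotate f12 f01
  obtain ⟨y2, hy2⟩ := K.exists_pendant H.rotate.rotate f23 f12
  obtain ⟨y3, hy3⟩ := K.exists_pendant H.rotate.rotate.rotate f34 f23
  obtain ⟨y4, hy4⟩ := K.exists_pendant H.rotate.rotate.rotate.rotate f45 f34
  have : ¬ G.Adj t h2 := fun _ => K.not_cycle4 t h2 h1 h0
  have : ¬ G.Adj t h3 := fun _ => K.not_cycle4 t h3 h4 h5
  exact ⟨y1, y2, y3, y4, H, ht5, ht0, hy1, hy2, hy3, hy4, f01 t ht0, ‹_›, ‹_›,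
    fun h => f45 t h ht5, fun _ => K.not_cycle4 t y1 h1 h0, fun _ => K.not_cycle5 t y2 h2 h1 h0,
    fun _ => K.not_cycle5 t y3 h3 h4 h5, fun _ => K.not_cycle4 t y4 h4 h5,
    fun _ => K.not_cycle4 y1 y2 h2 h1, fun _ => K.not_cycle5 y1 y3 h3 h2 h1,
    fun _ => K.not_cycle4 y2 y3 h3 h2, fun _ => K.not_cycle5 y2 y4 h4 h3 h2,
    fun _ => K.not_cycle4 y3 y4 h4 h3⟩

theorem false_of_triangleSetup_of_adj (S : TriangleSetup G h0 h1 h2 h3 h4 h5 t y1 y2 y3 y4)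
    (hb : Distant G h2 h3 h4 h5 h0 h1 y2 b) (hc : Distant G h4 h5 h0 h1 h2 h3 y4 c)
    (hbc : G.Adj b c) : False := by
  have : ¬ G.Adj b y4 := fun _ => K.not_cycle8 b y4 h4 h5 h0 h1 h2 y2
  have : ¬ G.Adj c y2 := fun _ => K.not_cycle8 c y2 h2 h1 h0 h5 h4 y4
  have : ¬ G.Adj b t := fun _ => K.not_cycle8 t b y2 h2 h3 h4 h5 h0
  have : ¬ G.Adj c t := fun _ => K.not_cycle8 t c y4 h4 h3 h2 h1 h0
  have : ¬ G.Adj b y1 := fun _ => K.not_cycle5 b y1 h1 h2 y2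
  have : ¬ G.Adj c y1 := fun _ => K.not_cycle8 y1 c y4 h4 h5 t h0 h1
  by_cases hyy : G.Adj y1 y4
  swap
  · exact K.not_path10 y1 h1 h2 y2 b c y4 h4 h5 t
  obtain ⟨r, hr, hr5, hr0⟩ := K.exists_adj_ne t h5 h0
  have : ¬ G.Adj r h0 := fun _ => K.not_cycle4 r h0 h5 t
  have : ¬ G.Adj r h5 := fun _ => K.not_cycle4 r h5 h0 t
  have : ¬ G.Adj r h1 := fun _ => K.not_cycle4 r h1 h0 t
  have : ¬ G.Adj r h4 := fun _ => K.not_cycle4 r h4 h5 t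
  have : ¬ G.Adj r h2 := fun _ => K.not_cycle5 r h2 h1 h0 t
  have : ¬ G.Adj r h3 := fun _ => K.not_cycle5 r h3 h4 h5 t
  have : ¬ G.Adj r y1 := fun _ => K.not_cycle5 r y1 h1 h0 t
  have : ¬ G.Adj r y4 := fun _ => K.not_cycle5 r y4 h4 h5 t
  have : ¬ G.Adj r b := fun _ => K.not_cycle8 r b y2 h2 h3 h4 h5 t
  by_cases hry : G.Adj r y2
  swap
  · exact K.not_path10 b y2 h2 h1 y1 y4 h4 h5 t r
  have : ¬ G.Adj r y3 := fun _ => K.not_cycle5 r y2 h2 h3 y3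
  obtain ⟨b', hb'⟩ := K.exists_distant S.hex.rotate.rotate.rotate S.pend3
    (fun _ _ H' _ hu hu' => K.not_triangles_01_34 H' hu hu' S.adj_t5 S.adj_t0)
  have : ¬ G.Adj b' y4 := fun _ => K.not_cycle5 b' y4 h4 h3 y3
  have : ¬ G.Adj b' y1 := fun _ => K.not_cycle8 b' y1 h1 h0 h5 h4 h3 y3
  have : ¬ G.Adj b' t := fun _ => K.not_cycle8 t b' y3 h3 h2 h1 h0 h5
  have : ¬ G.Adj b' r := fun _ => K.not_cycle8 r b' y3 h3 h2 h1 h0 t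
  exact K.not_path10 b' y3 h3 h4 y4 y1 h1 h0 t r

theorem false_of_triangle (H : Hexagon G h0 h1 h2 h3 h4 h5) (ht5 : G.Adj t h5)
    (ht0 : G.Adj t h0) : False := by
  obtain ⟨y1, y2, y3, y4, S⟩ := K.exists_triangleSetup H ht5 ht0
  obtain ⟨b, hb⟩ := K.exists_distant H.rotate.rotate S.pend2
    (fun _ _ _ H' hu hu' => K.not_triangles_01_34 H' hu hu' ht0 ht5)
  obtain ⟨c, hc⟩ := K.exists_distant H.rotate.rotate.rotate.rotate S.pend4
    (fun _ _ H' _ hu hu' => K.not_triangles_01_23 H' hu hu' ht5 ht0)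
  by_cases hbc : G.Adj b c
  · exact K.false_of_triangleSetup_of_adj S hb hc hbc
  have : ¬ G.Adj b y4 := fun _ => K.not_cycle8 b y4 h4 h5 h0 h1 h2 y2
  have : ¬ G.Adj c y2 := fun _ => K.not_cycle8 c y2 h2 h1 h0 h5 h4 y4
  obtain ⟨u, hu, huy, hnu⟩ := K.exists_adj_not_adj hb.adj
  have : ¬ G.Adj u h2 := fun _ => K.not_cycle4 u h2 y2 b
  have : ¬ G.Adj u h1 := fun _ => K.not_cycle5 u h1 h2 y2 b
  have : ¬ G.Adj u h3 := fun _ => K.not_cycle5 u h3 h2 y2 b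
  have : ¬ G.Adj u h0 := fun _ => K.not_cycle8 u h0 h5 h4 h3 h2 y2 b
  have : ¬ G.Adj u h4 := fun _ => K.not_cycle8 u h4 h5 h0 h1 h2 y2 b
  have : ¬ G.Adj u h5 := fun _ => K.not_cycle8 b y2 h2 h1 h0 t h5 u
  have : ¬ G.Adj u c := fun _ => K.not_cycle8 u c y4 h4 h3 h2 y2 b
  have : ¬ G.Adj u y4 := fun h =>
    K.false_of_triangleSetup_of_adj S hb ⟨h, ‹_›, ‹_›, ‹_›, ‹_›, ‹_›, ‹_›⟩ hu
  exact K.not_path10 u b y2 h2 h1 h0 h5 h4 y4 c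

end TriangleCase

section TriangleFreeCase

variable (hN : TriangleFreeHexagons G) (H : Hexagon G h0 h1 h2 h3 h4 h5) {y2 y4 c : V}
  (hy2 : Pendant G h2 h3 h4 h5 h0 h1 y2) (hy4 : Pendant G h4 h5 h0 h1 h2 h3 y4)
include hN H hy2 hy4

theorem not_adj_of_adj_distant {a : V} (hb : Distant G h2 h3 h4 h5 h0 h1 y2 b)
    (hc : Distant G h4 h5 h0 h1 h2 h3 y4 c) (hbc : ¬ G.Adj b c) (ha : G.Adj b a) (hay : a ≠ y2) :
    ¬ G.Adj a h0 ∧ ¬ G.Adj a h1 ∧ ¬ G.Adj a h2 ∧ ¬ G.Adj a h3 ∧ ¬ G.Adj a h4 ∧ ¬ G.Adj a c ∧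
      (G.Adj a y2 → ¬ G.Adj a h5) ∧ (G.Adj a y2 → ¬ G.Adj a y4) ∧
      (G.Adj a h5 → ¬ G.Adj a y4) := by
  have : ¬ G.Adj b y4 := fun _ => K.not_cycle8 b y4 h4 h5 h0 h1 h2 y2
  have : ¬ G.Adj a h2 := fun _ => K.not_cycle4 a h2 y2 b
  have : ¬ G.Adj a h1 := fun _ => by
    by_cases G.Adj a y2
    · exact K.not_cycle4 a h1 h2 y2
    · exact K.not_cycle5 a h1 h2 y2 b
  have : ¬ G.Adj a h3 := fun _ => by
    by_cases G.Adj a y2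
    · exact K.not_cycle4 a h3 h2 y2
    · exact K.not_cycle5 a h3 h2 y2 b
  have : ¬ G.Adj a h0 := fun _ => K.not_cycle8 a h0 h5 h4 h3 h2 y2 b
  have : ¬ G.Adj a h4 := fun _ => K.not_cycle8 a h4 h5 h0 h1 h2 y2 b
  exact ⟨‹_›, ‹_›, ‹_›, ‹_›, ‹_›, fun _ => K.not_cycle8 a c y4 h4 h3 h2 y2 b,
    fun _ _ => hN a y2 h2 h1 h0 h5 b (K.hexagon a y2 h2 h1 h0 h5) ha hb.adj,
    fun _ _ => hN a y2 h2 h3 h4 y4 b (K.hexagon a y2 h2 h3 h4 y4) ha hb.adj,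
    fun _ _ => K.not_cycle4 a h5 h4 y4⟩

theorem not_adj_pendant_of_adj_distant {a : V} (hb : Distant G h2 h3 h4 h5 h0 h1 y2 b)
    (hc : Distant G h4 h5 h0 h1 h2 h3 y4 c) (hbc : ¬ G.Adj b c) (ha : G.Adj b a) (hay : a ≠ y2) :
    ¬ G.Adj a y4 := by
  intro hay4
  obtain ⟨_, _, _, _, _, _, -, ha2, ha5⟩ := K.not_adj_of_adj_distant hN H hy2 hy4 hb hc hbc ha hay
  have : ¬ G.Adj a y2 := fun h => ha2 h hay4
  have : ¬ G.Adj a h5 := fun h => ha5 h hay4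
  have : ¬ G.Adj b y4 := fun _ => K.not_cycle8 b y4 h4 h5 h0 h1 h2 y2
  have : ¬ G.Adj c y2 := fun _ => K.not_cycle8 c y2 h2 h1 h0 h5 h4 y4
  have : ¬ G.Adj y2 y4 := fun _ => K.not_cycle5 y2 y4 h4 h3 h2
  have hv1 : ∀ v, G.Adj c v → ¬ G.Adj v h1 := fun v _ _ => K.not_cycle8 h1 h2 y2 b a y4 c v
  have hcb : ¬ G.Adj c b := fun h => hbc h.symm
  rcases K.exists_adj_avoiding (p := c) (q := y4) (r := y4) (s := y2) hc.adj.ne' (by grind)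
    with ⟨v, hv, hvy, _, _⟩ | ⟨v₁, v₂, hv₁, hv₂, _, hv₂y, _, hv₁y, _⟩
  · obtain ⟨_, _, _, _, _, _, -, -, -⟩ := K.not_adj_of_adj_distant hN H.reflect hy4.reflect
      hy2.reflect hc.reflect hb.reflect hcb hv hvy
    have := hv1 v hv
    exact K.not_path10 v c y4 h4 h5 h0 h1 h2 y2 b
  · obtain ⟨_, _, _, _, _, _, -, -, -⟩ := K.not_adj_of_adj_distant hN H.reflect hy4.reflect
      hy2.reflect hc.reflect hb.reflect hcb hv₂ hv₂y
    exact hN y4 c v₂ y2 b a v₁ (K.hexagon y4 c v₂ y2 b a) hv₁y hv₁.symm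

theorem adj_of_distant (hb : Distant G h2 h3 h4 h5 h0 h1 y2 b)
    (hc : Distant G h4 h5 h0 h1 h2 h3 y4 c) : G.Adj b c := by
  by_contra hbc
  have : ¬ G.Adj b y4 := fun _ => K.not_cycle8 b y4 h4 h5 h0 h1 h2 y2
  have : ¬ G.Adj c y2 := fun _ => K.not_cycle8 c y2 h2 h1 h0 h5 h4 y4
  have : ¬ G.Adj y2 y4 := fun _ => K.not_cycle5 y2 y4 h4 h3 h2
  rcases K.exists_adj_avoiding (p := b) (q := y2) (r := h5) (s := y2) (by grind) hb.adj.ne'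
    with ⟨u, hu, huy, _, _⟩ | ⟨u₁, u₂, hu₁, hu₂, hu₁y, hu₂y, _, _, _⟩
  · obtain ⟨_, _, _, _, _, _, -, -, -⟩ := K.not_adj_of_adj_distant hN H hy2 hy4 hb hc hbc hu huy
    have := K.not_adj_pendant_of_adj_distant hN H hy2 hy4 hb hc hbc hu huy
    exact K.not_path10 u b y2 h2 h1 h0 h5 h4 y4 c
  · obtain ⟨_, _, _, _, _, _, -, -, -⟩ := K.not_adj_of_adj_distant hN H hy2 hy4 hb hc hbc hu₁ hu₁y
    obtain ⟨_, _, _, _, _, _, -, -, -⟩ := K.not_adj_of_adj_distant hN H hy2 hy4 hb hc hbc hu₂ hu₂y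
    exact K.not_cycle8 b u₂ y2 h2 h1 h0 h5 u₁

theorem exists_adj_adj_h2_or_h5 (hc : Distant G h4 h5 h0 h1 h2 h3 y4 c) :
    ∃ d, G.Adj y2 d ∧ d ≠ h2 ∧ (G.Adj d h2 ∨ G.Adj d h5) := by
  obtain ⟨w₁, hw₁, hw₁2, -⟩ := K.exists_adj_ne y2 h2 h2
  obtain ⟨w₂, hw₂, hw₂2, hw₂₁⟩ := K.exists_adj_ne y2 h2 w₁
  by_cases h₁ : G.Adj w₁ h2 ∨ G.Adj w₁ h5
  · exact ⟨w₁, hw₁, hw₁2, h₁⟩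
  by_cases h₂ : G.Adj w₂ h2 ∨ G.Adj w₂ h5
  · exact ⟨w₂, hw₂, hw₂2, h₂⟩
  simp only [not_or] at h₁ h₂
  obtain ⟨_, _, _, _⟩ := K.not_adj_of_adj_pendant H.rotate.rotate hy2 hw₁ hw₁2
  obtain ⟨_, _, _, _⟩ := K.not_adj_of_adj_pendant H.rotate.rotate hy2 hw₂ hw₂2
  have := K.adj_of_distant hN H hy2 hy4 ⟨hw₁.symm, h₁.1, ‹_›, ‹_›, h₁.2, ‹_›, ‹_›⟩ hc
  have := K.adj_of_distant hN H hy2 hy4 ⟨hw₂.symm, h₂.1, ‹_›, ‹_›, h₂.2, ‹_›, ‹_›⟩ hc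
  exact (K.not_cycle4 w₁ c w₂ y2).elim

theorem false_of_triangles_at_pendants {y1 y5 d₂ d₄ : V} (hy1 : Pendant G h1 h2 h3 h4 h5 h0 y1)
    (hy5 : Pendant G h5 h0 h1 h2 h3 h4 y5) (hb : Distant G h2 h3 h4 h5 h0 h1 y2 b)
    (hc : Distant G h4 h5 h0 h1 h2 h3 y4 c) (hbc : G.Adj b c) (hd₂ : G.Adj y2 d₂)
    (hd₂' : G.Adj d₂ h2) (hd₄ : G.Adj y4 d₄) (hd₄' : G.Adj d₄ h4) : False := by
  have : ¬ G.Adj b y4 := fun _ => K.not_cycle8 b y4 h4 h5 h0 h1 h2 y2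
  have : ¬ G.Adj c y2 := fun _ => K.not_cycle8 c y2 h2 h1 h0 h5 h4 y4
  have : ¬ G.Adj y2 y4 := fun _ => K.not_cycle5 y2 y4 h4 h3 h2
  have : ¬ G.Adj y1 y2 := fun _ => K.not_cycle4 y1 y2 h2 h1
  have : ¬ G.Adj y4 y5 := fun _ => K.not_cycle4 y4 y5 h5 h4
  have : ¬ G.Adj y1 y5 := fun _ => K.not_cycle5 y1 y5 h5 h0 h1
  have : ¬ G.Adj b y1 := fun _ => K.not_cycle5 b y1 h1 h2 y2
  have : ¬ G.Adj c y5 := fun _ => K.not_cycle5 c y5 h5 h4 y4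
  have : ¬ G.Adj y1 c := fun _ => hN y2 h2 h1 y1 c b d₂ (K.hexagon y2 h2 h1 y1 c b) hd₂.symm hd₂'
  have : ¬ G.Adj y1 y4 := fun _ =>
    hN y4 h4 h5 h0 h1 y1 d₄ (K.hexagon y4 h4 h5 h0 h1 y1) hd₄.symm hd₄'
  have : ¬ G.Adj y2 y5 := fun _ =>
    hN y2 h2 h1 h0 h5 y5 d₂ (K.hexagon y2 h2 h1 h0 h5 y5) hd₂.symm hd₂'
  have : ¬ G.Adj b y5 := fun _ => hN y4 h4 h5 y5 b c d₄ (K.hexagon y4 h4 h5 y5 b c) hd₄.symm hd₄'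
  exact K.not_path10 y1 h1 h2 y2 b c y4 h4 h5 y5

end TriangleFreeCase

theorem false_of_triangleFreeHexagons (hN : TriangleFreeHexagons G)
    (H : Hexagon G h0 h1 h2 h3 h4 h5) : False := by
  have f {a0 a1 a2 a3 a4 a5 : V} (Hx : Hexagon G a0 a1 a2 a3 a4 a5) (z : V) :
      G.Adj z a0 → ¬ G.Adj z a1 := hN a0 a1 a2 a3 a4 a5 z Hx
  have hT {a0 a1 a2 a3 a4 a5 y : V} (w u : V) (Hx : Hexagon G y a0 a1 a2 a3 w)
      (_ : Hexagon G y a0 a5 a4 a3 w) : G.Adj u y → G.Adj u a0 → False := f Hx u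
  obtain ⟨y2, hy2⟩ := K.exists_pendant H.rotate.rotate (f H.rotate.rotate) (f H.rotate)
  obtain ⟨y4, hy4⟩ := K.exists_pendant H.rotate.rotate.rotate.rotate
    (f H.rotate.rotate.rotate.rotate) (f H.rotate.rotate.rotate)
  obtain ⟨b, hb⟩ := K.exists_distant H.rotate.rotate hy2 hT
  obtain ⟨c, hc⟩ := K.exists_distant H.rotate.rotate.rotate.rotate hy4 hT
  have := K.adj_of_distant hN H hy2 hy4 hb hc
  obtain ⟨d₂, hd₂, hd₂2, hd₂'⟩ := K.exists_adj_adj_h2_or_h5 hN H hy2 hy4 hc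
  obtain ⟨d₄, hd₄, hd₄4, hd₄'⟩ := K.exists_adj_adj_h2_or_h5 hN H.reflect
    hy4.reflect hy2.reflect hb.reflect
  obtain ⟨_, _, _, _⟩ := K.not_adj_of_adj_pendant H.rotate.rotate hy2 hd₂ hd₂2
  obtain ⟨_, _, _, _⟩ := K.not_adj_of_adj_pendant H.rotate.rotate.rotate.rotate hy4 hd₄ hd₄4
  rcases hd₂' with hd₂' | hd₂' <;> rcases hd₄' with hd₄' | hd₄'
  · obtain ⟨y1, hy1⟩ := K.exists_pendant H.rotate (f H.rotate) (f H)
    obtain ⟨y5, hy5⟩ := K.exists_pendant H.reflect.rotate.reflect (f H.reflect.rotate.reflect)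
      (f H.rotate.rotate.rotate.rotate)
    exact K.false_of_triangles_at_pendants hN H hy2 hy4 hy1 hy5 hb hc ‹_› hd₂ hd₂' hd₄ hd₄'
  · exact K.not_cycle8 d₄ y4 c b y2 d₂ h2 h1
  · exact K.not_cycle8 d₂ y2 b c y4 d₄ h4 h5
  · exact K.not_cycle8 y2 d₂ h5 h4 y4 d₄ h1 h2

end Admissible

end GoodHole

open GoodHole in
theorem stmt_16 {V : Type*} [Fintype V] (G : SimpleGraph V) [DecidableRel G.Adj]
    (hdeg : ∀ v : V, 3 ≤ G.degree v) (hP10 : P10Free G)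
    (hC4 : ¬ HasCycleLength G 4) (hC8 : ¬ HasCycleLength G 8)
    (m : ℕ) (x : ZMod m → V) (hgood : IsGoodHole G m x) :
    m ≠ 6 := by
  rintro rfl
  obtain ⟨-, hx, hno5, -⟩ := hgood
  have K : Admissible G := ⟨hC4, hC8, fun ⟨w, p, hp, hlen⟩ => hno5 ⟨w, p, hp, by omega, by omega⟩,
    hP10, exists_adj_ne_ne hdeg⟩
  by_cases hN : TriangleFreeHexagons G
  · exact K.false_of_triangleFreeHexagons hN (hexagon_of_isCircInduced hx)
  · simp only [TriangleFreeHexagons, not_forall, not_not] at hN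
    obtain ⟨h0, h1, h2, h3, h4, h5, t, H, ht0, ht1⟩ := hN
    exact K.false_of_triangle H.rotate ht0 ht1
end

section
/- Let G be a simple graph with no C_4 and no C_8, and let C = x_1...x_5 x_1 be a 5-cycle in G. Suppose y_1, ..., y_5, v_1, ..., v_5 are vertices outside C such that for each i (mod 5): y_i is adjacent to x_i and to no other vertex of C, v_i is adjacent to y_i and y_{i+2} and to no vertex of C, and v_i is adjacent to none of y_{i+1}, y_{i+3}, y_{i+4}. If additionally {y_1,...,y_5} and {v_1,...,v_5} are each independent sets, then x_1 y_1 v_1 y_3 v_3 y_5 v_5 y_2 v_2 y_4 is an induced path on 10 vertices in G; hence G is not P_{10}-free. -/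
open SimpleGraph

theorem stmt_18 {V : Type*} (G : SimpleGraph V)
    (hC4 : ¬ HasCycleLength G 4) (hC8 : ¬ HasCycleLength G 8)
    (x : ZMod 5 → V) (hinj : Function.Injective x)
    (hadj : ∀ i : ZMod 5, G.Adj (x i) (x (i + 1)))
    (y v : ZMod 5 → V)
    (hyout : ∀ i : ZMod 5, y i ∉ Set.range x)
    (hvout : ∀ i : ZMod 5, v i ∉ Set.range x)
    -- y_i is adjacent to x_i and to no other vertex of C
    (hyx : ∀ i j : ZMod 5, G.Adj (y i) (x j) ↔ j = i)
    -- v_i is adjacent to y_i and y_{i+2}, and to no vertex of C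
    (hvy : ∀ i : ZMod 5, G.Adj (v i) (y i) ∧ G.Adj (v i) (y (i + 2)))
    (hvx : ∀ i j : ZMod 5, ¬ G.Adj (v i) (x j))
    -- v_i is adjacent to none of y_{i+1}, y_{i+3}, y_{i+4}
    (hvy' : ∀ i : ZMod 5,
      ¬ G.Adj (v i) (y (i + 1)) ∧ ¬ G.Adj (v i) (y (i + 3)) ∧ ¬ G.Adj (v i) (y (i + 4)))
    -- {y_1,…,y_5} and {v_1,…,v_5} are independent sets
    (hyind : ∀ i j : ZMod 5, ¬ G.Adj (y i) (y j))
    (hvind : ∀ i j : ZMod 5, ¬ G.Adj (v i) (v j)) :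
    Function.Injective ![x 1, y 1, v 1, y 3, v 3, y 5, v 5, y 2, v 2, y 4] ∧
    (∀ a b : Fin 10,
      G.Adj (![x 1, y 1, v 1, y 3, v 3, y 5, v 5, y 2, v 2, y 4] a)
            (![x 1, y 1, v 1, y 3, v 3, y 5, v 5, y 2, v 2, y 4] b) ↔
        (a.val + 1 = b.val ∨ b.val + 1 = a.val)) ∧
    ¬ P10Free G := by

  -- abbreviation for the path vector
  set P : Fin 10 → V := ![x 1, y 1, v 1, y 3, v 3, y 5, v 5, y 2, v 2, y 4] with hP
  -- v_i is nonadjacent to y_j unless j = i or j = i + 2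
  have nv : ∀ i j : ZMod 5, j ≠ i → j ≠ i + 2 → ¬ G.Adj (v i) (y j) := by
    intro i j h1 h2 h
    have h5 : ∀ i j : ZMod 5, j = i ∨ j = i+1 ∨ j = i+2 ∨ j = i+3 ∨ j = i+4 := by decide
    rcases h5 i j with h'|h'|h'|h'|h' <;> subst h'
    · exact h1 rfl
    · exact (hvy' i).1 h
    · exact h2 rfl
    · exact (hvy' i).2.1 h
    · exact (hvy' i).2.2 h
  have key_yv : ∀ i j : ZMod 5, y i ≠ v j := fun i j h => hvx j i (h ▸ (hyx i i).mpr rfl)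
  have key_yy : ∀ i j : ZMod 5, y i = y j → i = j :=
    fun i j h => (hyx j i).mp (h ▸ (hyx i i).mpr rfl)
  have key_vv : ∀ i j : ZMod 5, v i = v j → i = j := by
    intro i j h
    by_contra hne
    have h1 : G.Adj (v j) (y i) := h ▸ (hvy i).1
    have h2 : G.Adj (v j) (y (i+2)) := h ▸ (hvy i).2
    rcases eq_or_ne i (j+2) with h'|h'
    · subst h'
      have hgen : ∀ j : ZMod 5, j+2+2 ≠ j ∧ j+2+2 ≠ j+2 := by decide
      exact nv j _ (hgen j).1 (hgen j).2 h2
    · exact nv j i hne h' h1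
  have hinj10 : Function.Injective P := by
    intro a b hab
    fin_cases a <;> fin_cases b <;>
      simp only [hP, Matrix.cons_val_zero, Matrix.cons_val_one, Matrix.head_cons,
        Matrix.cons_val_succ, Fin.mk_zero, Fin.mk_one] at hab ⊢ <;>
      first
      | rfl
      | exact absurd (key_yy _ _ hab) (by decide)
      | exact absurd (key_vv _ _ hab) (by decide)
      | exact absurd hab (key_yv _ _)
      | exact absurd hab (fun h => key_yv _ _ h.symm)
      | exact absurd hab (fun h => hyout _ ⟨_, h⟩)
      | exact absurd hab (fun h => hyout _ ⟨_, h.symm⟩)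
      | exact absurd hab (fun h => hvout _ ⟨_, h⟩)
      | exact absurd hab (fun h => hvout _ ⟨_, h.symm⟩)
  have e0 : G.Adj (x 1) (y 1) := ((hyx 1 1).mpr rfl).symm
  have e1 : G.Adj (y 1) (v 1) := (hvy 1).1.symm
  have e2 : G.Adj (v 1) (y 3) := (hvy 1).2
  have e3 : G.Adj (y 3) (v 3) := (hvy 3).1.symm
  have e4 : G.Adj (v 3) (y 5) := (hvy 3).2
  have e5 : G.Adj (y 5) (v 5) := (hvy 5).1.symm
  have e6 : G.Adj (v 5) (y 2) := (hvy 5).2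
  have e7 : G.Adj (y 2) (v 2) := (hvy 2).1.symm
  have e8 : G.Adj (v 2) (y 4) := (hvy 2).2
  have hadj10 : ∀ a b : Fin 10, G.Adj (P a) (P b) ↔ (a.val + 1 = b.val ∨ b.val + 1 = a.val) := by
    intro a b
    fin_cases a <;> fin_cases b <;>
      simp only [hP, Matrix.cons_val_zero, Matrix.cons_val_one, Matrix.head_cons,
        Matrix.cons_val_succ, Fin.mk_zero, Fin.mk_one] <;>
      norm_num <;>
      first
      | exact e0 | exact e0.symm | exact e1 | exact e1.symm | exact e2 | exact e2.symm
      | exact e3 | exact e3.symm | exact e4 | exact e4.symm | exact e5 | exact e5.symm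
      | exact e6 | exact e6.symm | exact e7 | exact e7.symm | exact e8 | exact e8.symm
      | exact fun h => h.ne rfl
      | exact fun h => hvx _ _ h
      | exact fun h => hvx _ _ h.symm
      | exact fun h => hyind _ _ h
      | exact fun h => hvind _ _ h
      | exact fun h => absurd ((hyx _ _).mp h) (by decide)
      | exact fun h => absurd ((hyx _ _).mp h.symm) (by decide)
      | exact fun h => nv _ _ (by decide) (by decide) h
      | exact fun h => nv _ _ (by decide) (by decide) h.symm
  refine ⟨hinj10, hadj10, fun hfree => hfree ⟨P, hinj10, hadj10⟩⟩
end
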